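/- arXiv:2409.16933 — 6 statements merged into one kernel-verified Lean document; each statement's English description precedes it below -/
import Mathlib

section
/- Let ν be a Borel probability measure on ℝ such that the identity function is ν-integrable, and let b = ∫ x dν(x) be its barycenter. Let P, p : ℝ → ℝ be ν-integrable and let λ ≥ 0 be such that both λ·P + p and λ·P − p are convex functions on ℝ. Then |∫ p dν − p(b)| ≤ λ·(∫ P dν − P(b)). -/
open MeasureTheory

/-- If `ν` is a Borel probability measure on `ℝ` with barycenter
`b = ∫ x dν`, and `P, p` are `ν`-integrable with `λ·P + p` and `λ·P − p` convex for some
`λ ≥ 0`, then `|∫ p dν − p(b)| ≤ λ·(∫ P dν − P(b))`. -/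
theorem abs_integral_sub_le_of_convex_combination
    (ν : Measure ℝ) [IsProbabilityMeasure ν]
    (hid : Integrable (fun x : ℝ => x) ν)
    (P p : ℝ → ℝ)
    (hP : Integrable P ν) (hp : Integrable p ν)
    (lam : ℝ) (hlam : 0 ≤ lam)
    (hconv₁ : ConvexOn ℝ Set.univ (fun x => lam * P x + p x))
    (hconv₂ : ConvexOn ℝ Set.univ (fun x => lam * P x - p x)) :
    |(∫ x, p x ∂ν) - p (∫ x, x ∂ν)| ≤ lam * ((∫ x, P x ∂ν) - P (∫ x, x ∂ν)) := by
  set b := ∫ x, x ∂ν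
  have hi₁ : Integrable (fun x => lam * P x + p x) ν := (hP.const_mul lam).add hp
  have hi₂ : Integrable (fun x => lam * P x - p x) ν := (hP.const_mul lam).sub hp
  have j₁ : lam * P b + p b ≤ ∫ x, (lam * P x + p x) ∂ν := by
    have := hconv₁.map_integral_le (f := fun x : ℝ => x)
      (hconv₁.continuousOn isOpen_univ) isClosed_univ
      (Filter.Eventually.of_forall fun _ => Set.mem_univ _) hid hi₁
    simpa using this
  have j₂ : lam * P b - p b ≤ ∫ x, (lam * P x - p x) ∂ν := by
    have := hconv₂.map_integral_le (f := fun x : ℝ => x)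
      (hconv₂.continuousOn isOpen_univ) isClosed_univ
      (Filter.Eventually.of_forall fun _ => Set.mem_univ _) hid hi₂
    simpa using this
  rw [integral_add (hP.const_mul lam) hp, integral_sub (hP.const_mul lam) hp,
    integral_const_mul] at *
  rw [abs_le]
  constructor <;> linarith
end

section
/- For every dimension d ≥ 1 there exists C > 0 such that for all h ∈ (0, 1/2), ∫_{{|z| ≤ 1/2}} |z|·(|z| + h)^{−d} dz ≤ C, where the integral is with respect to Lebesgue measure on ℝ^d. Consequently, there exist C' > 0 and h₀ ∈ (0, 1/2) such that for all h ∈ (0, h₀), the ratio (∫_{{|z| ≤ 1/2}} |z|·(|z| + h)^{−d} dz) / (∫_{{|z| ≤ 1/2}} (|z| + h)^{−d} dz) is at most C'/log(1/h). -/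
open MeasureTheory Metric

open Set in
/-- Polar-coordinate computation of integrals of radial functions over radial sets. -/
lemma bj_polar_set (d : ℕ) (hd : 1 ≤ d) (f : ℝ → ℝ) (s : Set ℝ) (hs : MeasurableSet s) :
    ∫ z in {z : EuclideanSpace ℝ (Fin d) | ‖z‖ ∈ s}, f ‖z‖ =
      d * (volume (ball (0 : EuclideanSpace ℝ (Fin d)) 1)).toReal *
        ∫ y in s ∩ Ioi (0:ℝ), y ^ (d-1) * f y := by
  haveI : Nonempty (Fin d) := ⟨⟨0, hd⟩⟩
  have hS : MeasurableSet {z : EuclideanSpace ℝ (Fin d) | ‖z‖ ∈ s} :=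
    measurable_norm hs
  have h1 : ∫ z in {z : EuclideanSpace ℝ (Fin d) | ‖z‖ ∈ s}, f ‖z‖
      = ∫ z : EuclideanSpace ℝ (Fin d), (s.indicator f) ‖z‖ := by
    have he : (fun z : EuclideanSpace ℝ (Fin d) => (s.indicator f) ‖z‖)
        = ({z : EuclideanSpace ℝ (Fin d) | ‖z‖ ∈ s}.indicator (fun z => f ‖z‖)) := by
      funext z; by_cases hz : ‖z‖ ∈ s <;> simp [Set.indicator_apply, Set.mem_setOf_eq, hz]
    rw [he, integral_indicator hS]
  rw [h1, integral_fun_norm_addHaar volume (s.indicator f)]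
  have h2 : ∫ y in Ioi (0:ℝ),
        y ^ (Module.finrank ℝ (EuclideanSpace ℝ (Fin d)) - 1) • (s.indicator f) y
      = ∫ y in s ∩ Ioi (0:ℝ), y ^ (d-1) * f y := by
    have he : ∀ y : ℝ, y ^ (Module.finrank ℝ (EuclideanSpace ℝ (Fin d)) - 1) • (s.indicator f) y
        = s.indicator (fun y => y ^ (d-1) * f y) y := by
      intro y
      by_cases hy : y ∈ s <;>
        simp [finrank_euclideanSpace, Fintype.card_fin, smul_eq_mul, Set.indicator_apply, hy]
    simp_rw [he]
    rw [setIntegral_indicator hs, inter_comm]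
  rw [h2]
  simp [finrank_euclideanSpace, nsmul_eq_mul, mul_assoc, measureReal_def]

open Set in
/-- 1D bound for the first moment. -/
lemma bj_num_1d (d : ℕ) (hd : 1 ≤ d) (h : ℝ) (hh : 0 < h) :
    ∫ y in Ioc (0:ℝ) (1/2), y ^ (d-1) * (y * (y+h) ^ (-(d:ℝ))) ≤ 1/2 := by
  have hint : IntegrableOn (fun y : ℝ => y ^ (d-1) * (y * (y+h) ^ (-(d:ℝ)))) (Ioc 0 (1/2)) := by
    apply (ContinuousOn.integrableOn_compact (isCompact_Icc (a := (0:ℝ)) (b := 1/2)) ?_).mono_set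
      Ioc_subset_Icc_self
    apply ContinuousOn.mul (continuousOn_pow _)
    apply ContinuousOn.mul continuousOn_id
    apply ContinuousOn.rpow_const ((continuous_id.add continuous_const).continuousOn)
    intro x hx
    have := hx.1
    exact Or.inl (by show x + h ≠ 0; exact ne_of_gt (by linarith))
  calc ∫ y in Ioc (0:ℝ) (1/2), y ^ (d-1) * (y * (y+h) ^ (-(d:ℝ)))
      ≤ ∫ _ in Ioc (0:ℝ) (1/2), (1:ℝ) := by
        apply setIntegral_mono_on hint (integrableOn_const (by simp))
          measurableSet_Ioc
        intro y hy
        have hy0 : 0 < y := hy.1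
        have hyh : 0 < y + h := by linarith
        have : (y+h) ^ (-(d:ℝ)) = ((y+h)^d)⁻¹ := by
          rw [Real.rpow_neg hyh.le, Real.rpow_natCast]
        rw [this, ← mul_assoc, ← pow_succ, Nat.sub_add_cancel hd]
        rw [← div_eq_mul_inv, div_le_one (by positivity)]
        exact pow_le_pow_left₀ hy0.le (by linarith) d
    _ = 1/2 := by simp

open Set in
/-- 1D logarithmic lower bound for the kernel mass. -/
lemma bj_den_1d (d : ℕ) (hd : 1 ≤ d) (h : ℝ) (hh : 0 < h) (hh2 : h ≤ 1/2) :
    ((2:ℝ)^d)⁻¹ * Real.log ((1/2)/h) ≤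
      ∫ y in Icc h (1/2), y ^ (d-1) * (y+h) ^ (-(d:ℝ)) := by
  have hcont : ContinuousOn (fun y : ℝ => y ^ (d-1) * (y+h) ^ (-(d:ℝ))) (Icc h (1/2)) := by
    apply ContinuousOn.mul (continuousOn_pow _)
    apply ContinuousOn.rpow_const ((continuous_id.add continuous_const).continuousOn)
    intro x hx
    have := hx.1
    exact Or.inl (by show x + h ≠ 0; exact ne_of_gt (by linarith))
  have hint : IntegrableOn (fun y : ℝ => y ^ (d-1) * (y+h) ^ (-(d:ℝ))) (Icc h (1/2)) :=
    hcont.integrableOn_compact isCompact_Icc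
  have hint2 : IntegrableOn (fun y : ℝ => ((2:ℝ)^d)⁻¹ * y⁻¹) (Icc h (1/2)) := by
    apply ContinuousOn.integrableOn_compact isCompact_Icc
    exact ContinuousOn.mul continuousOn_const
      (continuousOn_id.inv₀ (fun x hx => by
        simp only [id_eq]; exact (lt_of_lt_of_le hh hx.1).ne'))
  have key : ∫ y in Icc h (1/2), ((2:ℝ)^d)⁻¹ * y⁻¹ ≤
      ∫ y in Icc h (1/2), y ^ (d-1) * (y+h) ^ (-(d:ℝ)) := by
    apply setIntegral_mono_on hint2 hint measurableSet_Icc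
    intro y hy
    have hy0 : 0 < y := lt_of_lt_of_le hh hy.1
    have hyh : 0 < y + h := by linarith
    have h1 : (y+h) ^ (-(d:ℝ)) = ((y+h)^d)⁻¹ := by
      rw [Real.rpow_neg hyh.le, Real.rpow_natCast]
    rw [h1]
    have h2 : ((2*y)^d)⁻¹ ≤ ((y+h)^d)⁻¹ := by
      apply inv_anti₀ (by positivity)
      exact pow_le_pow_left₀ hyh.le (by linarith [hy.1]) d
    calc ((2:ℝ)^d)⁻¹ * y⁻¹ = y ^ (d-1) * ((2*y)^d)⁻¹ := by
          rw [mul_pow]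
          have : y^d = y^(d-1) * y := by rw [← pow_succ, Nat.sub_add_cancel hd]
          rw [this]
          field_simp
      _ ≤ y ^ (d-1) * ((y+h)^d)⁻¹ := by
          apply mul_le_mul_of_nonneg_left h2 (by positivity)
  refine le_trans ?_ key
  rw [integral_const_mul]
  apply mul_le_mul_of_nonneg_left _ (by positivity)
  rw [integral_Icc_eq_integral_Ioc, ← intervalIntegral.integral_of_le hh2,
    integral_inv_of_pos hh (by norm_num)]

/-- For every `d ≥ 1` there is `C > 0` such that for all `h ∈ (0, 1/2)`,
`∫_{|z| ≤ 1/2} |z|·(|z| + h)^{−d} dz ≤ C`; consequently there exist `C' > 0` and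
`h₀ ∈ (0, 1/2)` such that for all `h ∈ (0, h₀)` the normalized first moment
`(∫ |z|·(|z|+h)^{−d}) / (∫ (|z|+h)^{−d})` is at most `C'/log(1/h)`. -/
theorem bresch_jabin_kernel_first_moment
    (d : ℕ) (hd : 1 ≤ d) :
    (∃ C : ℝ, 0 < C ∧ ∀ h : ℝ, 0 < h → h < 1/2 →
      (∫ z in closedBall (0 : EuclideanSpace ℝ (Fin d)) (1/2),
        ‖z‖ * (‖z‖ + h) ^ (-(d:ℝ))) ≤ C) ∧
    (∃ C' h₀ : ℝ, 0 < C' ∧ 0 < h₀ ∧ h₀ < 1/2 ∧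
      ∀ h : ℝ, 0 < h → h < h₀ →
        (∫ z in closedBall (0 : EuclideanSpace ℝ (Fin d)) (1/2),
            ‖z‖ * (‖z‖ + h) ^ (-(d:ℝ))) /
          (∫ z in closedBall (0 : EuclideanSpace ℝ (Fin d)) (1/2),
            (‖z‖ + h) ^ (-(d:ℝ))) ≤ C' / Real.log (1/h)) := by
  classical
  set E := EuclideanSpace ℝ (Fin d)
  set V : ℝ := (volume (ball (0 : E) 1)).toReal with hVdef
  have hV : 0 < V :=
    ENNReal.toReal_pos (measure_ball_pos volume 0 (by norm_num)).ne' measure_ball_lt_top.ne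
  have hdR : (0:ℝ) < d := by exact_mod_cast hd
  -- identification of the closed ball as a radial set
  have hset : closedBall (0 : E) (1/2) = {z : E | ‖z‖ ∈ Set.Iic (1/2)} := by
    ext z; simp [mem_closedBall_zero_iff]
  have hIicIoi : Set.Iic (1/2 : ℝ) ∩ Set.Ioi (0:ℝ) = Set.Ioc (0:ℝ) (1/2) := by
    ext x; simp [Set.mem_Ioc, and_comm]
  -- uniform bound on the numerator
  have hnum : ∀ h : ℝ, 0 < h →
      (∫ z in closedBall (0 : E) (1/2), ‖z‖ * (‖z‖ + h) ^ (-(d:ℝ))) ≤ d * V * (1/2) := by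
    intro h hh
    have hpol := bj_polar_set d hd (fun r => r * (r + h) ^ (-(d:ℝ)))
      (Set.Iic (1/2)) measurableSet_Iic
    rw [hIicIoi] at hpol
    rw [hset]
    calc (∫ z in {z : E | ‖z‖ ∈ Set.Iic (1/2)}, ‖z‖ * (‖z‖ + h) ^ (-(d:ℝ)))
        = d * V * ∫ y in Set.Ioc (0:ℝ) (1/2), y ^ (d-1) * (y * (y + h) ^ (-(d:ℝ))) := hpol
      _ ≤ d * V * (1/2) := by
          apply mul_le_mul_of_nonneg_left (bj_num_1d d hd h hh) (by positivity)
  have hnumnonneg : ∀ h : ℝ, 0 < h →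
      0 ≤ ∫ z in closedBall (0 : E) (1/2), ‖z‖ * (‖z‖ + h) ^ (-(d:ℝ)) := by
    intro h hh
    apply setIntegral_nonneg measurableSet_closedBall
    intro x _
    have : (0:ℝ) ≤ (‖x‖ + h) ^ (-(d:ℝ)) := Real.rpow_nonneg (by positivity) _
    positivity
  set C : ℝ := d * V * (1/2) with hCdef
  have hC : 0 < C := by positivity
  refine ⟨⟨C, hC, fun h hh _ => hnum h hh⟩, ?_⟩
  -- the denominator lower bound
  set c : ℝ := d * V * ((2:ℝ)^d)⁻¹ / 2 with hcdef
  have hc : 0 < c := by positivity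
  refine ⟨C / c, 1/4, by positivity, by norm_num, by norm_num, ?_⟩
  intro h hh hh4
  have hh2 : h ≤ 1/2 := by linarith
  have hL : 0 < Real.log (1/h) := Real.log_pos (by rw [lt_div_iff₀ hh]; linarith)
  -- log comparison
  have hlog : (1/2) * Real.log (1/h) ≤ Real.log ((1/2)/h) := by
    have h1h : (4:ℝ) ≤ 1/h := by rw [le_div_iff₀ hh]; linarith
    have hlog4 : Real.log 4 ≤ Real.log (1/h) := Real.log_le_log (by norm_num) h1h
    have h4 : Real.log 4 = 2 * Real.log 2 := by
      rw [show (4:ℝ) = 2^2 by norm_num, Real.log_pow]; push_cast; ring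
    have heq : Real.log ((1/2)/h) = Real.log (1/h) - Real.log 2 := by
      rw [show (1/2)/h = (1/h)/2 by ring, Real.log_div (by positivity) (by norm_num)]
    rw [heq]; rw [h4] at hlog4; linarith
  -- denominator estimate
  have hden : c * Real.log (1/h) ≤
      ∫ z in closedBall (0 : E) (1/2), (‖z‖ + h) ^ (-(d:ℝ)) := by
    have hfi : IntegrableOn (fun z : E => (‖z‖ + h) ^ (-(d:ℝ))) (closedBall 0 (1/2)) := by
      apply ContinuousOn.integrableOn_compact (isCompact_closedBall _ _)
      apply Continuous.continuousOn
      exact (continuous_norm.add continuous_const).rpow_const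
        (fun x => Or.inl (by show ‖x‖ + h ≠ 0; positivity))
    have hsub : {z : E | ‖z‖ ∈ Set.Icc h (1/2)} ⊆ closedBall (0 : E) (1/2) := by
      intro z hz
      exact mem_closedBall_zero_iff.2 hz.2
    have hmono : (∫ z in {z : E | ‖z‖ ∈ Set.Icc h (1/2)}, (‖z‖ + h) ^ (-(d:ℝ)))
        ≤ ∫ z in closedBall (0 : E) (1/2), (‖z‖ + h) ^ (-(d:ℝ)) := by
      apply setIntegral_mono_set hfi
      · exact Filter.Eventually.of_forall fun x => Real.rpow_nonneg (by positivity) _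
      · exact HasSubset.Subset.eventuallyLE hsub
    have hpol := bj_polar_set d hd (fun r => (r + h) ^ (-(d:ℝ)))
      (Set.Icc h (1/2)) measurableSet_Icc
    have hIcc : Set.Icc h (1/2) ∩ Set.Ioi (0:ℝ) = Set.Icc h (1/2) := by
      apply Set.inter_eq_left.2
      intro x hx
      exact lt_of_lt_of_le hh hx.1
    rw [hIcc] at hpol
    calc c * Real.log (1/h)
        = d * V * (((2:ℝ)^d)⁻¹ * ((1/2) * Real.log (1/h))) := by rw [hcdef]; ring
      _ ≤ d * V * (((2:ℝ)^d)⁻¹ * Real.log ((1/2)/h)) := by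
          apply mul_le_mul_of_nonneg_left _ (by positivity)
          exact mul_le_mul_of_nonneg_left hlog (by positivity)
      _ ≤ d * V * ∫ y in Set.Icc h (1/2), y ^ (d-1) * (y + h) ^ (-(d:ℝ)) := by
          apply mul_le_mul_of_nonneg_left (bj_den_1d d hd h hh hh2) (by positivity)
      _ = ∫ z in {z : E | ‖z‖ ∈ Set.Icc h (1/2)}, (‖z‖ + h) ^ (-(d:ℝ)) := hpol.symm
      _ ≤ _ := hmono
  have hcL : 0 < c * Real.log (1/h) := by positivity
  calc (∫ z in closedBall (0 : E) (1/2), ‖z‖ * (‖z‖ + h) ^ (-(d:ℝ))) /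
          (∫ z in closedBall (0 : E) (1/2), (‖z‖ + h) ^ (-(d:ℝ)))
      ≤ C / (c * Real.log (1/h)) :=
        div_le_div₀ hC.le (hnum h hh) hcL hden
    _ = (C / c) / Real.log (1/h) := (div_div C c (Real.log (1/h))).symm
end

section
/- For every dimension d ≥ 1 there exists a constant C > 0 (depending only on d) such that for every continuously differentiable function f : ℝ^d → ℝ and all x, y ∈ ℝ^d with x ≠ y, |f(x) − f(y)| ≤ C·|x − y|·(D_{|x−y|}|∇f|(x) + D_{|x−y|}|∇f|(y)), where the inequality is understood in the extended nonnegative reals when the right-hand side is infinite. -/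
open MeasureTheory Metric ENNReal

/-- The operator `D_r g(x) = (1/r)·∫_{B(0,r)} g(x+z)/|z|^{d−1} dz`, with values
in `[0,∞]`, applied to an extended-nonnegative-valued function `g` on `ℝ^d`. -/
noncomputable def Dop (d : ℕ) (r : ℝ) (g : EuclideanSpace ℝ (Fin d) → ℝ≥0∞)
    (x : EuclideanSpace ℝ (Fin d)) : ℝ≥0∞ :=
  (ENNReal.ofReal r)⁻¹ *
    ∫⁻ z in ball (0 : EuclideanSpace ℝ (Fin d)) r,
      g (x + z) / ENNReal.ofReal (‖z‖ ^ ((d:ℝ) - 1))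

section Aux
open Set

variable {d : ℕ}
local notation "E" => EuclideanSpace ℝ (Fin d)

lemma lint_affine (g : E → ℝ≥0∞) (hg : Measurable g) (x : E) {t : ℝ} (ht : 0 < t) :
    ∫⁻ w, g (x + t • (w - x)) = ENNReal.ofReal ((t ^ d)⁻¹) * ∫⁻ u, g u := by
  have h1 : ∀ w : E, x + t • (w - x) = (x - t • x) + t • w := by
    intro w; rw [smul_sub]; abel
  simp_rw [h1]
  have h2 := lintegral_map (μ := (volume : Measure E)) (f := fun v => g ((x - t • x) + v))
    (g := fun w : E => t • w) (hg.comp (measurable_const_add _)) (measurable_const_smul t)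
  rw [← h2, Measure.map_addHaar_smul volume ht.ne', finrank_euclideanSpace_fin,
    lintegral_smul_measure, lintegral_add_left_eq_self (fun v => g v) (x - t • x),
    abs_of_nonneg (by positivity), smul_eq_mul]


lemma ftc_bound (f : E → ℝ) (hf : ContDiff ℝ 1 f) (x w : E) :
    ENNReal.ofReal |f x - f w| ≤
      ∫⁻ t in Set.Ioc (0:ℝ) 1, ENNReal.ofReal (‖gradient f (x + t • (w - x))‖ * ‖w - x‖) := by
  set ψ : ℝ → E := fun s => x + s • (w - x) with hψdef
  set φ' : ℝ → ℝ := fun t => fderiv ℝ f (ψ t) (w - x) with hφ'def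
  have hψ : ∀ t : ℝ, HasDerivAt ψ (w - x) t := by
    intro t
    have := ((hasDerivAt_id t).smul_const (w - x)).const_add x
    simp only [id_eq, one_smul] at this
    exact this
  have hder : ∀ t ∈ Set.uIcc (0:ℝ) 1, HasDerivAt (fun s => f (ψ s)) (φ' t) t := fun t _ =>
    ((hf.differentiable one_ne_zero (ψ t)).hasFDerivAt).comp_hasDerivAt t (hψ t)
  have hψc : Continuous ψ := by fun_prop
  have hcont : Continuous φ' :=
    ((hf.continuous_fderiv one_ne_zero).comp hψc).clm_apply continuous_const
  have hint : IntervalIntegrable φ' volume 0 1 := hcont.intervalIntegrable _ _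
  have heq : ∫ t in (0:ℝ)..1, φ' t = f (ψ 1) - f (ψ 0) :=
    intervalIntegral.integral_eq_sub_of_hasDerivAt hder hint
  have hψ0 : ψ 0 = x := by simp [hψdef]
  have hψ1 : ψ 1 = w := by simp [hψdef]
  have hgnorm : ∀ u : E, ‖gradient f u‖ = ‖fderiv ℝ f u‖ := fun u =>
    (InnerProductSpace.toDual ℝ _).symm.norm_map _
  have hb : ∀ t : ℝ, |φ' t| ≤ ‖gradient f (ψ t)‖ * ‖w - x‖ := by
    intro t
    rw [hgnorm]
    exact (fderiv ℝ f (ψ t)).le_opNorm (w - x)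
  have hbc : Continuous fun t => ‖gradient f (ψ t)‖ * ‖w - x‖ := by
    simp only [hgnorm]
    exact (((hf.continuous_fderiv one_ne_zero).comp hψc).norm).mul continuous_const
  rw [hψ0, hψ1] at heq
  have h1 : |f x - f w| ≤ ∫ t in (0:ℝ)..1, ‖gradient f (ψ t)‖ * ‖w - x‖ := by
    rw [abs_sub_comm, ← heq]
    calc |∫ t in (0:ℝ)..1, φ' t| ≤ ∫ t in (0:ℝ)..1, |φ' t| :=
          intervalIntegral.abs_integral_le_integral_abs zero_le_one
      _ ≤ ∫ t in (0:ℝ)..1, ‖gradient f (ψ t)‖ * ‖w - x‖ :=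
          intervalIntegral.integral_mono_on zero_le_one hint.abs
            (hbc.intervalIntegrable _ _) (fun t _ => hb t)
  calc ENNReal.ofReal |f x - f w| ≤ ENNReal.ofReal (∫ t in (0:ℝ)..1, ‖gradient f (ψ t)‖ * ‖w - x‖) :=
        ENNReal.ofReal_le_ofReal h1
    _ = ∫⁻ t in Set.Ioc (0:ℝ) 1, ENNReal.ofReal (‖gradient f (ψ t)‖ * ‖w - x‖) := by
        rw [intervalIntegral.integral_of_le zero_le_one,
          ← ofReal_integral_eq_lintegral_ofReal
            ((hbc.integrableOn_Icc (a := 0) (b := 1)).mono_set Set.Ioc_subset_Icc_self)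
            (Filter.Eventually.of_forall fun t => by positivity)]

lemma tpow_integral {d : ℕ} (hd : 1 ≤ d) {a : ℝ} (ha : 0 < a) :
    ∫⁻ t in Set.Ioc a 1, ENNReal.ofReal (t ^ (-(d:ℝ) - 1)) ≤
      ENNReal.ofReal (a ^ (-(d:ℝ)) / d) := by
  rcases le_or_gt 1 a with h | h
  · rw [Set.Ioc_eq_empty (not_lt.2 h), Measure.restrict_empty, lintegral_zero_measure]
    exact zero_le
  · have hco : ContinuousOn (fun t : ℝ => t ^ (-(d:ℝ) - 1)) (Set.Icc a 1) := by
      intro t ht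
      exact (Real.continuousAt_rpow_const t _ (Or.inl (by linarith [ht.1]))).continuousWithinAt
    have hint : IntegrableOn (fun t : ℝ => t ^ (-(d:ℝ) - 1)) (Set.Ioc a 1) volume :=
      (hco.integrableOn_Icc).mono_set Set.Ioc_subset_Icc_self
    have hnn : 0 ≤ᵐ[volume.restrict (Set.Ioc a 1)] fun t : ℝ => t ^ (-(d:ℝ) - 1) := by
      filter_upwards [ae_restrict_mem measurableSet_Ioc] with t ht
      exact Real.rpow_nonneg (by linarith [ht.1]) _
    rw [← ofReal_integral_eq_lintegral_ofReal hint hnn]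
    have hne : -(d:ℝ) - 1 ≠ -1 := by
      have h1 : (1:ℝ) ≤ (d:ℝ) := by exact_mod_cast hd
      intro hc; linarith
    have hmem : (0:ℝ) ∉ Set.uIcc a 1 := by
      rw [Set.uIcc_of_le h.le]; intro hc; exact absurd hc.1 (not_le.2 ha)
    have hval : ∫ t in Set.Ioc a 1, t ^ (-(d:ℝ) - 1) =
        (1 - a ^ (-(d:ℝ))) / (-(d:ℝ)) := by
      rw [← intervalIntegral.integral_of_le h.le, integral_rpow (Or.inr ⟨hne, hmem⟩)]
      norm_num
    rw [hval]
    apply ENNReal.ofReal_le_ofReal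
    have hdpos : (0:ℝ) < (d:ℝ) := by exact_mod_cast hd
    rw [div_neg]
    have hA : 0 ≤ a ^ (-(d:ℝ)) := Real.rpow_nonneg ha.le _
    calc -((1 - a ^ (-(d:ℝ))) / (d:ℝ)) = (a ^ (-(d:ℝ)) - 1) / (d:ℝ) := by ring
      _ ≤ a ^ (-(d:ℝ)) / (d:ℝ) := by gcongr; linarith

set_option maxHeartbeats 1000000 in
lemma key_bound (hd : 1 ≤ d) (f : E → ℝ) (hf : ContDiff ℝ 1 f)
    (x m : E) {r : ℝ} (hr : 0 < r) (hsub : ball m (r/2) ⊆ ball x r) :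
    ∫⁻ w in ball m (r/2), ENNReal.ofReal |f x - f w| ≤
      ENNReal.ofReal (r ^ d / d) *
        ∫⁻ z in ball (0:E) r,
          ENNReal.ofReal ‖gradient f (x + z)‖ / ENNReal.ofReal (‖z‖ ^ ((d:ℝ) - 1)) := by
  set G : E → ℝ≥0∞ := fun u => ENNReal.ofReal ‖gradient f u‖ with hGdef
  have hgradc : Continuous (gradient f) :=
    (InnerProductSpace.toDual ℝ _).symm.continuous.comp (hf.continuous_fderiv one_ne_zero)
  have hGm : Measurable G := ENNReal.measurable_ofReal.comp hgradc.norm.measurable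
  -- the function appearing after the first swap
  set c : E → ℝ≥0∞ := fun z => G (x + z) * ENNReal.ofReal ‖z‖ with hcdef
  have hcm : Measurable c :=
    (hGm.comp (measurable_const_add x)).mul
      (ENNReal.measurable_ofReal.comp continuous_norm.measurable)
  set Ψ : ℝ → E → ℝ≥0∞ := fun t z =>
    ENNReal.ofReal (t ^ (-(d:ℝ) - 1)) * (ball (0:E) (t*r)).indicator c z with hΨdef
  -- Step A + B: reduce to ∫⁻ t ∫⁻ w
  have stepA : ∫⁻ w in ball m (r/2), ENNReal.ofReal |f x - f w| ≤
      ∫⁻ w in ball m (r/2), ∫⁻ t in Set.Ioc (0:ℝ) 1,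
        G (x + t • (w - x)) * ENNReal.ofReal ‖w - x‖ := by
    apply lintegral_mono
    intro w
    refine (ftc_bound f hf x w).trans_eq ?_
    exact lintegral_congr fun t => ENNReal.ofReal_mul (norm_nonneg _)
  have stepB : ∫⁻ w in ball m (r/2), ∫⁻ t in Set.Ioc (0:ℝ) 1,
        G (x + t • (w - x)) * ENNReal.ofReal ‖w - x‖ =
      ∫⁻ t in Set.Ioc (0:ℝ) 1, ∫⁻ w in ball m (r/2),
        G (x + t • (w - x)) * ENNReal.ofReal ‖w - x‖ := by
    apply lintegral_lintegral_swap
    apply Measurable.aemeasurable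
    refine Measurable.mul (f := fun p : E × ℝ => G (x + p.2 • (p.1 - x)))
      (g := fun p : E × ℝ => ENNReal.ofReal ‖p.1 - x‖) ?_ ?_
    · apply hGm.comp
      have : Continuous fun p : E × ℝ => x + p.2 • (p.1 - x) := by fun_prop
      exact this.measurable
    · exact ENNReal.measurable_ofReal.comp
        ((continuous_fst.sub continuous_const).norm.measurable)
  have stepC : ∀ t ∈ Set.Ioc (0:ℝ) 1,
      ∫⁻ w in ball m (r/2), G (x + t • (w - x)) * ENNReal.ofReal ‖w - x‖ ≤
        ∫⁻ z, Ψ t z := by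
    intro t ht
    obtain ⟨ht0, ht1⟩ := ht
    classical
    set H : E → ℝ≥0∞ := fun u => G u * ENNReal.ofReal (‖u - x‖ / t) with hHdef
    have hHm : Measurable H := hGm.mul (ENNReal.measurable_ofReal.comp
      (((continuous_id.sub continuous_const).norm.div_const t).measurable))
    have hin : ∀ w : E, G (x + t • (w - x)) * ENNReal.ofReal ‖w - x‖ = H (x + t • (w - x)) := by
      intro w
      show _ = G (x + t • (w - x)) * ENNReal.ofReal (‖x + t • (w - x) - x‖ / t)
      rw [add_sub_cancel_left, norm_smul, Real.norm_eq_abs, abs_of_pos ht0,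
        mul_div_cancel_left₀ _ ht0.ne']
    have hmem : ∀ w ∈ ball m (r/2), x + t • (w - x) ∈ ball x (t*r) := by
      intro w hw
      rw [mem_ball, dist_eq_norm, add_sub_cancel_left, norm_smul, Real.norm_eq_abs,
        abs_of_pos ht0]
      have hwx : ‖w - x‖ < r := by rw [← dist_eq_norm]; exact mem_ball.mp (hsub hw)
      exact mul_lt_mul_of_pos_left hwx ht0
    calc ∫⁻ w in ball m (r/2), G (x + t • (w - x)) * ENNReal.ofReal ‖w - x‖
        = ∫⁻ w in ball m (r/2), H (x + t • (w - x)) := lintegral_congr fun w => hin w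
      _ = ∫⁻ w, (ball m (r/2)).indicator (fun w => H (x + t • (w - x))) w :=
          (lintegral_indicator measurableSet_ball _).symm
      _ ≤ ∫⁻ w, (ball x (t*r)).indicator H (x + t • (w - x)) := by
          apply lintegral_mono; intro w
          dsimp only
          by_cases hw : w ∈ ball m (r/2)
          · rw [Set.indicator_of_mem hw, Set.indicator_of_mem (hmem w hw)]
          · rw [Set.indicator_of_notMem hw]; exact zero_le
      _ = ENNReal.ofReal ((t^d)⁻¹) * ∫⁻ u, (ball x (t*r)).indicator H u :=
          lint_affine _ (hHm.indicator measurableSet_ball) x ht0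
      _ = ENNReal.ofReal ((t^d)⁻¹) * ∫⁻ z, (ball (0:E) (t*r)).indicator (fun z => H (x + z)) z := by
          congr 1
          rw [← lintegral_add_left_eq_self (fun u => (ball x (t*r)).indicator H u) x]
          apply lintegral_congr; intro z
          by_cases hz : z ∈ ball (0:E) (t*r)
          · rw [Set.indicator_of_mem hz, Set.indicator_of_mem
              (by simpa [mem_ball, dist_eq_norm] using mem_ball_zero_iff.mp hz)]
          · rw [Set.indicator_of_notMem hz, Set.indicator_of_notMem (fun hc => hz
              (by simpa [mem_ball, dist_eq_norm] using hc))]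
      _ = ∫⁻ z, Ψ t z := by
          have hHxz : ∀ z : E, H (x + z) = ENNReal.ofReal t⁻¹ * c z := by
            intro z
            show G (x + z) * ENNReal.ofReal (‖x + z - x‖ / t) = _
            rw [add_sub_cancel_left, div_eq_inv_mul,
              ENNReal.ofReal_mul (inv_nonneg.mpr ht0.le), hcdef]
            ring
          have hpow : ENNReal.ofReal ((t^d)⁻¹) * ENNReal.ofReal t⁻¹ =
              ENNReal.ofReal (t ^ (-(d:ℝ) - 1)) := by
            rw [← ENNReal.ofReal_mul (by positivity)]
            congr 1
            rw [show -(d:ℝ) - 1 = -((d:ℝ)+1) by ring, Real.rpow_neg ht0.le,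
              Real.rpow_add ht0, Real.rpow_natCast, Real.rpow_one, mul_inv]
          rw [← lintegral_const_mul' _ _ ENNReal.ofReal_ne_top]
          apply lintegral_congr; intro z
          simp only [hΨdef]
          by_cases hz : z ∈ ball (0:E) (t*r)
          · rw [Set.indicator_of_mem hz, Set.indicator_of_mem hz, hHxz, ← mul_assoc, hpow]
          · rw [Set.indicator_of_notMem hz, Set.indicator_of_notMem hz, mul_zero, mul_zero]
  have stepB2 : ∫⁻ t in Set.Ioc (0:ℝ) 1, ∫⁻ z, Ψ t z =
      ∫⁻ z, ∫⁻ t in Set.Ioc (0:ℝ) 1, Ψ t z := by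
    apply lintegral_lintegral_swap
    have hA : MeasurableSet {p : ℝ × E | ‖p.2‖ < p.1 * r} := by
      apply measurableSet_lt <;> fun_prop
    have heq : (Function.uncurry Ψ) = {p : ℝ × E | ‖p.2‖ < p.1 * r}.indicator
        (fun p => ENNReal.ofReal (p.1 ^ (-(d:ℝ) - 1)) * c p.2) := by
      ext ⟨t, z⟩
      simp only [Function.uncurry, hΨdef]
      classical
      rw [Set.indicator_apply, Set.indicator_apply]
      simp only [mem_ball_zero_iff, Set.mem_setOf_eq]
      split_ifs with h
      · rfl
      · exact mul_zero _
    refine Measurable.aemeasurable ?_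
    rw [heq]
    apply Measurable.indicator ?_ hA
    have hm1 : Measurable fun t : ℝ => t ^ (-(d:ℝ) - 1) := by measurability
    exact (ENNReal.measurable_ofReal.comp (hm1.comp measurable_fst)).mul
      (hcm.comp measurable_snd)
  have stepD : ∀ z : E, ∫⁻ t in Set.Ioc (0:ℝ) 1, Ψ t z ≤
      (ball (0:E) r).indicator
        (fun z => ENNReal.ofReal (r ^ d / d) *
          (G (x + z) / ENNReal.ofReal (‖z‖ ^ ((d:ℝ) - 1)))) z := by
    intro z
    classical
    by_cases hz0 : z = 0
    · subst hz0
      have hc0 : c 0 = 0 := by simp [hcdef]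
      have hzero : ∀ t : ℝ, Ψ t 0 = 0 := by
        intro t
        simp only [hΨdef, Set.indicator_apply, hc0]
        split_ifs <;> simp
      simp only [hzero, lintegral_zero]
      exact zero_le
    by_cases hzr : ‖z‖ < r
    · have hn : 0 < ‖z‖ := norm_pos_iff.mpr hz0
      set a := ‖z‖ / r with hadef
      have ha : 0 < a := div_pos hn hr
      have hΨeq : ∀ t ∈ Set.Ioc (0:ℝ) 1, Ψ t z =
          (Set.Ioi a).indicator (fun t => ENNReal.ofReal (t ^ (-(d:ℝ) - 1))) t * c z := by
        intro t _
        by_cases hta : a < t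
        · have hzm : z ∈ ball (0:E) (t*r) := mem_ball_zero_iff.mpr ((div_lt_iff₀ hr).mp hta)
          simp only [hΨdef]
          rw [Set.indicator_of_mem hzm, Set.indicator_of_mem (Set.mem_Ioi.mpr hta)]
        · have hzm : z ∉ ball (0:E) (t*r) := by
            rw [mem_ball_zero_iff]
            exact fun hc => hta ((div_lt_iff₀ hr).mpr hc)
          simp only [hΨdef]
          rw [Set.indicator_of_notMem hzm, Set.indicator_of_notMem (by simpa using hta),
            mul_zero, zero_mul]
      have hczne : c z ≠ ⊤ := ENNReal.mul_ne_top ENNReal.ofReal_ne_top ENNReal.ofReal_ne_top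
      have hfinal : ENNReal.ofReal (a ^ (-(d:ℝ)) / d) * c z =
          ENNReal.ofReal (r ^ d / d) * (G (x + z) / ENNReal.ofReal (‖z‖ ^ ((d:ℝ) - 1))) := by
        have h3 : (0:ℝ) < ‖z‖ ^ ((d:ℝ) - 1) := Real.rpow_pos_of_pos hn _
        have hreal : a ^ (-(d:ℝ)) / d * ‖z‖ = r ^ d / d * (‖z‖ ^ ((d:ℝ) - 1))⁻¹ := by
          have h1 : a ^ (-(d:ℝ)) = r ^ (d:ℝ) / ‖z‖ ^ (d:ℝ) := by
            rw [hadef, Real.rpow_neg (by positivity), Real.div_rpow hn.le hr.le, inv_div]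
          have h2 : ‖z‖ ^ ((d:ℝ) - 1) = ‖z‖ ^ (d:ℝ) / ‖z‖ := by
            rw [Real.rpow_sub hn, Real.rpow_one]
          have h4 : (0:ℝ) < ‖z‖ ^ (d:ℝ) := Real.rpow_pos_of_pos hn _
          have h5 : (0:ℝ) < (d:ℝ) := by exact_mod_cast hd
          rw [h1, h2, ← Real.rpow_natCast r d]
          field_simp
        calc ENNReal.ofReal (a ^ (-(d:ℝ)) / d) * c z
            = G (x + z) * ENNReal.ofReal (a ^ (-(d:ℝ)) / d * ‖z‖) := by
              rw [ENNReal.ofReal_mul (by positivity), hcdef]; ring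
          _ = G (x + z) * ENNReal.ofReal (r ^ d / d * (‖z‖ ^ ((d:ℝ) - 1))⁻¹) := by rw [hreal]
          _ = G (x + z) * (ENNReal.ofReal (r ^ d / d) *
                (ENNReal.ofReal (‖z‖ ^ ((d:ℝ) - 1)))⁻¹) := by
              rw [ENNReal.ofReal_mul (by positivity), ENNReal.ofReal_inv_of_pos h3]
          _ = ENNReal.ofReal (r ^ d / d) *
                (G (x + z) / ENNReal.ofReal (‖z‖ ^ ((d:ℝ) - 1))) := by
              rw [div_eq_mul_inv, mul_left_comm, div_eq_mul_inv]
      calc ∫⁻ t in Set.Ioc (0:ℝ) 1, Ψ t z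
          = ∫⁻ t in Set.Ioc (0:ℝ) 1,
              (Set.Ioi a).indicator (fun t => ENNReal.ofReal (t ^ (-(d:ℝ) - 1))) t * c z :=
            setLIntegral_congr_fun measurableSet_Ioc hΨeq
        _ = (∫⁻ t in Set.Ioc (0:ℝ) 1,
              (Set.Ioi a).indicator (fun t => ENNReal.ofReal (t ^ (-(d:ℝ) - 1))) t) * c z :=
            lintegral_mul_const' _ _ hczne
        _ = (∫⁻ t in Set.Ioi a ∩ Set.Ioc (0:ℝ) 1, ENNReal.ofReal (t ^ (-(d:ℝ) - 1))) * c z := by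
            rw [lintegral_indicator measurableSet_Ioi, Measure.restrict_restrict measurableSet_Ioi]
        _ ≤ (∫⁻ t in Set.Ioc a 1, ENNReal.ofReal (t ^ (-(d:ℝ) - 1))) * c z :=
            mul_le_mul_left (lintegral_mono_set (by intro t htm; exact ⟨htm.1, htm.2.2⟩)) _
        _ ≤ ENNReal.ofReal (a ^ (-(d:ℝ)) / d) * c z :=
            mul_le_mul_left (tpow_integral hd ha) _
        _ = (ball (0:E) r).indicator
              (fun z => ENNReal.ofReal (r ^ d / d) *
                (G (x + z) / ENNReal.ofReal (‖z‖ ^ ((d:ℝ) - 1)))) z := by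
            rw [Set.indicator_of_mem (mem_ball_zero_iff.mpr hzr)]
            exact hfinal
    · have hzero : ∀ t ∈ Set.Ioc (0:ℝ) 1, Ψ t z = 0 := by
        intro t ht
        have hzm : z ∉ ball (0:E) (t*r) := by
          rw [mem_ball_zero_iff]
          push_neg at hzr
          intro hc
          nlinarith [ht.1, ht.2]
        simp only [hΨdef]
        rw [Set.indicator_of_notMem hzm, mul_zero]
      calc ∫⁻ t in Set.Ioc (0:ℝ) 1, Ψ t z
          = ∫⁻ _ in Set.Ioc (0:ℝ) 1, (0:ℝ≥0∞) :=
            setLIntegral_congr_fun measurableSet_Ioc hzero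
        _ = 0 := lintegral_zero
        _ ≤ _ := zero_le
  calc ∫⁻ w in ball m (r/2), ENNReal.ofReal |f x - f w|
      ≤ ∫⁻ t in Set.Ioc (0:ℝ) 1, ∫⁻ w in ball m (r/2),
          G (x + t • (w - x)) * ENNReal.ofReal ‖w - x‖ := stepA.trans_eq stepB
    _ ≤ ∫⁻ t in Set.Ioc (0:ℝ) 1, ∫⁻ z, Ψ t z :=
        setLIntegral_mono' measurableSet_Ioc stepC
    _ = ∫⁻ z, ∫⁻ t in Set.Ioc (0:ℝ) 1, Ψ t z := stepB2
    _ ≤ ∫⁻ z, (ball (0:E) r).indicator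
          (fun z => ENNReal.ofReal (r ^ d / d) *
            (G (x + z) / ENNReal.ofReal (‖z‖ ^ ((d:ℝ) - 1)))) z := lintegral_mono stepD
    _ = ∫⁻ z in ball (0:E) r, ENNReal.ofReal (r ^ d / d) *
          (G (x + z) / ENNReal.ofReal (‖z‖ ^ ((d:ℝ) - 1))) :=
        lintegral_indicator measurableSet_ball _
    _ = ENNReal.ofReal (r ^ d / d) *
          ∫⁻ z in ball (0:E) r, G (x + z) / ENNReal.ofReal (‖z‖ ^ ((d:ℝ) - 1)) :=
        lintegral_const_mul' _ _ ENNReal.ofReal_ne_top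

end Aux

/-- (Lagrange-type lemma.) For every `d ≥ 1` there is a constant `C > 0`
such that every `C¹` function `f : ℝ^d → ℝ` satisfies, for all `x ≠ y`,
`|f(x) − f(y)| ≤ C·|x − y|·(D_{|x−y|}|∇f|(x) + D_{|x−y|}|∇f|(y))`,
the inequality holding in the extended nonnegative reals. -/
theorem lagrange_maximal_difference_bound
    (d : ℕ) (hd : 1 ≤ d) :
    ∃ C : ℝ, 0 < C ∧
      ∀ f : EuclideanSpace ℝ (Fin d) → ℝ, ContDiff ℝ 1 f →
        ∀ x y : EuclideanSpace ℝ (Fin d), x ≠ y →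
          ENNReal.ofReal |f x - f y| ≤
            ENNReal.ofReal (C * ‖x - y‖) *
              (Dop d ‖x - y‖ (fun u => ENNReal.ofReal ‖gradient f u‖) x +
               Dop d ‖x - y‖ (fun u => ENNReal.ofReal ‖gradient f u‖) y) := by
  classical
  haveI : Nonempty (Fin d) := ⟨⟨0, hd⟩⟩
  haveI hnt : Nontrivial (EuclideanSpace ℝ (Fin d)) := inferInstance
  set c : ℝ≥0∞ := volume (ball (0 : EuclideanSpace ℝ (Fin d)) 1) with hcdef
  have hc0 : c ≠ 0 := (measure_ball_pos _ _ one_pos).ne'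
  have hctop : c ≠ ⊤ := measure_ball_lt_top.ne
  have hc' : 0 < c.toReal := ENNReal.toReal_pos hc0 hctop
  have hd' : (0:ℝ) < d := by exact_mod_cast hd
  refine ⟨2^d / (d * c.toReal), by positivity, ?_⟩
  intro f hf x y hxy
  set r : ℝ := ‖x - y‖ with hrdef
  have hr : 0 < r := by rw [hrdef]; exact norm_sub_pos_iff.mpr hxy
  set G : EuclideanSpace ℝ (Fin d) → ℝ≥0∞ := fun u => ENNReal.ofReal ‖gradient f u‖ with hGdef
  set m := midpoint ℝ x y with hmdef
  have hdist : dist x y = r := by rw [dist_eq_norm, hrdef]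
  have hsubx : ball m (r/2) ⊆ ball x r := by
    intro w hw
    have h1 : dist m x = r / 2 := by
      rw [hmdef, dist_midpoint_left, hdist]
      rw [Real.norm_ofNat]
      ring
    have h2 : dist w m < r / 2 := mem_ball.mp hw
    have := dist_triangle w m x
    exact mem_ball.mpr (by linarith)
  have hsuby : ball m (r/2) ⊆ ball y r := by
    intro w hw
    have h1 : dist m y = r / 2 := by
      rw [hmdef, dist_midpoint_right, hdist]
      rw [Real.norm_ofNat]
      ring
    have h2 : dist w m < r / 2 := mem_ball.mp hw
    have := dist_triangle w m y
    exact mem_ball.mpr (by linarith)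
  have hfc : Continuous f := hf.continuous
  have hmx : Measurable fun w => ENNReal.ofReal |f x - f w| :=
    ENNReal.measurable_ofReal.comp ((continuous_const.sub hfc).abs.measurable)
  set B := ball m (r/2) with hBdef
  set Kx := ∫⁻ z in ball (0:EuclideanSpace ℝ (Fin d)) r,
    G (x + z) / ENNReal.ofReal (‖z‖ ^ ((d:ℝ)-1)) with hKxdef
  set Ky := ∫⁻ z in ball (0:EuclideanSpace ℝ (Fin d)) r,
    G (y + z) / ENNReal.ofReal (‖z‖ ^ ((d:ℝ)-1)) with hKydef
  have hμB : volume B = ENNReal.ofReal ((r/2)^d) * c := by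
    rw [hBdef, Measure.addHaar_ball volume m (by positivity : (0:ℝ) ≤ r/2),
      finrank_euclideanSpace_fin]
  have hB0 : volume B ≠ 0 := (measure_ball_pos _ _ (by positivity)).ne'
  have hBtop : volume B ≠ ⊤ := measure_ball_lt_top.ne
  have hsum : volume B * ENNReal.ofReal |f x - f y| ≤
      ENNReal.ofReal (r^d / d) * (Kx + Ky) := by
    calc volume B * ENNReal.ofReal |f x - f y|
        = ∫⁻ _ in B, ENNReal.ofReal |f x - f y| := by rw [setLIntegral_const, mul_comm]
      _ ≤ ∫⁻ w in B, (ENNReal.ofReal |f x - f w| + ENNReal.ofReal |f y - f w|) := by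
          apply lintegral_mono; intro w
          refine le_trans (ENNReal.ofReal_le_ofReal ?_) (ENNReal.ofReal_add_le)
          calc |f x - f y| ≤ |f x - f w| + |f w - f y| := abs_sub_le _ _ _
            _ = |f x - f w| + |f y - f w| := by rw [abs_sub_comm (f w)]
      _ = (∫⁻ w in B, ENNReal.ofReal |f x - f w|) +
            ∫⁻ w in B, ENNReal.ofReal |f y - f w| := lintegral_add_left hmx _
      _ ≤ ENNReal.ofReal (r^d/d) * Kx + ENNReal.ofReal (r^d/d) * Ky :=
          add_le_add (key_bound hd f hf x m hr hsubx) (key_bound hd f hf y m hr hsuby)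
      _ = ENNReal.ofReal (r^d/d) * (Kx + Ky) := (mul_add _ _ _).symm
  have hC : ENNReal.ofReal (r^d/d) ≤
      ENNReal.ofReal (2^d/(d*c.toReal)) * volume B := by
    have heq : (2:ℝ)^d/(d*c.toReal) * ((r/2)^d) * c.toReal = r^d/d := by
      rw [div_pow r 2 d]
      rw [show 2^d/(d*c.toReal) * (r^d/2^d) * c.toReal = r^d/d * (c.toReal / c.toReal) *
        ((2:ℝ)^d / 2^d) by ring, div_self hc'.ne', div_self (by positivity : (2:ℝ)^d ≠ 0)]
      ring
    calc ENNReal.ofReal (r^d/d)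
        = ENNReal.ofReal (2^d/(d*c.toReal) * ((r/2)^d) * c.toReal) := by rw [heq]
      _ = ENNReal.ofReal (2^d/(d*c.toReal)) *
            (ENNReal.ofReal ((r/2)^d) * ENNReal.ofReal c.toReal) := by
          rw [ENNReal.ofReal_mul (by positivity), ENNReal.ofReal_mul (by positivity), mul_assoc]
      _ = ENNReal.ofReal (2^d/(d*c.toReal)) * volume B := by
          rw [ENNReal.ofReal_toReal hctop, hμB]
      _ ≤ ENNReal.ofReal (2^d/(d*c.toReal)) * volume B := le_rfl
  have hgoal : ENNReal.ofReal |f x - f y| ≤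
      ENNReal.ofReal (2^d/(d*c.toReal)) * (Kx + Ky) := by
    calc ENNReal.ofReal |f x - f y|
        = (volume B)⁻¹ * (volume B * ENNReal.ofReal |f x - f y|) := by
          rw [← mul_assoc, ENNReal.inv_mul_cancel hB0 hBtop, one_mul]
      _ ≤ (volume B)⁻¹ * (ENNReal.ofReal (r^d/d) * (Kx + Ky)) := mul_le_mul_right hsum _
      _ ≤ (volume B)⁻¹ * ((ENNReal.ofReal (2^d/(d*c.toReal)) * volume B) * (Kx + Ky)) :=
          mul_le_mul_right (mul_le_mul_left hC _) _
      _ = ENNReal.ofReal (2^d/(d*c.toReal)) * (Kx + Ky) := by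
          rw [show (ENNReal.ofReal (2^d/(d*c.toReal)) * volume B) * (Kx + Ky) =
            volume B * (ENNReal.ofReal (2^d/(d*c.toReal)) * (Kx + Ky)) by ring,
            ← mul_assoc, ENNReal.inv_mul_cancel hB0 hBtop, one_mul]
  have hRHS : ENNReal.ofReal (2^d/(d*c.toReal) * ‖x - y‖) *
      (Dop d ‖x - y‖ (fun u => ENNReal.ofReal ‖gradient f u‖) x +
       Dop d ‖x - y‖ (fun u => ENNReal.ofReal ‖gradient f u‖) y) =
      ENNReal.ofReal (2^d/(d*c.toReal)) * (Kx + Ky) := by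
    have h1 : Dop d ‖x - y‖ (fun u => ENNReal.ofReal ‖gradient f u‖) x =
        (ENNReal.ofReal r)⁻¹ * Kx := rfl
    have h2 : Dop d ‖x - y‖ (fun u => ENNReal.ofReal ‖gradient f u‖) y =
        (ENNReal.ofReal r)⁻¹ * Ky := rfl
    rw [h1, h2, ← mul_add, ← hrdef, ENNReal.ofReal_mul (by positivity), mul_assoc,
      ← mul_assoc (ENNReal.ofReal r), ENNReal.mul_inv_cancel
        (ENNReal.ofReal_pos.mpr hr).ne' ENNReal.ofReal_ne_top, one_mul]
  exact hRHS ▸ hgoal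
end

section
/- Let M > 0 and let q : ℝ → ℝ be twice continuously differentiable with q(x) = 0 for all x ≥ M and for all x ≤ 0. Then there exists λ > 0 such that the three functions x ↦ λ·x·log x + x·q(x), x ↦ λ·x·log x − x·q(x), and x ↦ λ·x·log x + q(x) are all convex on (0, ∞). -/
open Real Set Filter

/-- Auxiliary: if `lam * x⁻¹ + p'' x ≥ 0` on `(0,∞)` then `lam·x·log x + p x` is convex there. -/
lemma aux_convex (lam : ℝ) (p : ℝ → ℝ) (hp : ContDiff ℝ 2 p)
    (h2 : ∀ x : ℝ, 0 < x → 0 ≤ lam * x⁻¹ + deriv (deriv p) x) :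
    ConvexOn ℝ (Set.Ioi 0) (fun x => lam * (x * Real.log x) + p x) := by
  have hp1 : Differentiable ℝ p := hp.differentiable two_ne_zero
  have hpd : ContDiff ℝ 1 (deriv p) := (contDiff_succ_iff_deriv.mp hp).2.2
  have hpd1 : Differentiable ℝ (deriv p) := hpd.differentiable one_ne_zero
  refine convexOn_of_hasDerivWithinAt2_nonneg (f' := fun x => lam * (Real.log x + 1) + deriv p x)
    (f'' := fun x => lam * x⁻¹ + deriv (deriv p) x) (convex_Ioi 0) ?_ ?_ ?_ ?_
  · exact (continuousOn_const.mul (continuousOn_id.mul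
      (Real.continuousOn_log.mono (fun x hx => ne_of_gt hx)))).add hp.continuous.continuousOn
  · rw [interior_Ioi]
    intro x hx
    exact (((Real.hasDerivAt_mul_log (ne_of_gt hx)).const_mul lam).add
      ((hp1 x).hasDerivAt)).hasDerivWithinAt
  · rw [interior_Ioi]
    intro x hx
    exact ((((Real.hasDerivAt_log (ne_of_gt hx)).add_const 1).const_mul lam).add
      ((hpd1 x).hasDerivAt)).hasDerivWithinAt
  · rw [interior_Ioi]
    exact fun x hx => h2 x hx

/-- If `q : ℝ → ℝ` is `C²` and vanishes on `(−∞,0]` and on `[M,∞)`,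
then there exists `λ > 0` such that `x ↦ λ·x·log x + x·q(x)`, `x ↦ λ·x·log x − x·q(x)`
and `x ↦ λ·x·log x + q(x)` are all convex on `(0,∞)`. -/
theorem convexity_with_compactly_supported_perturbation
    (M : ℝ) (hM : 0 < M) (q : ℝ → ℝ) (hq : ContDiff ℝ 2 q)
    (hq_right : ∀ x : ℝ, M ≤ x → q x = 0)
    (hq_left : ∀ x : ℝ, x ≤ 0 → q x = 0) :
    ∃ lam : ℝ, 0 < lam ∧
      ConvexOn ℝ (Set.Ioi 0) (fun x => lam * (x * Real.log x) + x * q x) ∧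
      ConvexOn ℝ (Set.Ioi 0) (fun x => lam * (x * Real.log x) - x * q x) ∧
      ConvexOn ℝ (Set.Ioi 0) (fun x => lam * (x * Real.log x) + q x) := by
  have hq1 : Differentiable ℝ q := hq.differentiable two_ne_zero
  have hqd : ContDiff ℝ 1 (deriv q) := (contDiff_succ_iff_deriv.mp hq).2.2
  have hqd1 : Differentiable ℝ (deriv q) := hqd.differentiable one_ne_zero
  have hqd2c : Continuous (deriv (deriv q)) := (contDiff_one_iff_deriv.mp hqd).2
  -- derivatives vanish for x > M
  have hq0 : ∀ x : ℝ, M < x → deriv q x = 0 := by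
    intro x hx
    have hev : q =ᶠ[nhds x] (fun _ => (0 : ℝ)) :=
      Filter.eventuallyEq_of_mem (Ioi_mem_nhds hx) (fun y hy => hq_right y (le_of_lt hy))
    rw [hev.deriv_eq, deriv_const]
  have hq00 : ∀ x : ℝ, M < x → deriv (deriv q) x = 0 := by
    intro x hx
    have hev : deriv q =ᶠ[nhds x] (fun _ => (0 : ℝ)) :=
      Filter.eventuallyEq_of_mem (Ioi_mem_nhds hx) (fun y hy => hq0 y hy)
    rw [hev.deriv_eq, deriv_const]
  -- second derivative of x * q x
  set r : ℝ → ℝ := fun x => deriv q x + (deriv q x + x * deriv (deriv q) x) with hr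
  have hD1 : ∀ x : ℝ, HasDerivAt (fun x => x * q x) (q x + x * deriv q x) x := by
    intro x
    have := (hasDerivAt_id' x).fun_mul ((hq1 x).hasDerivAt)
    simpa using this
  have hderiv1 : deriv (fun x => x * q x) = fun x => q x + x * deriv q x :=
    funext fun x => (hD1 x).deriv
  have hD2 : ∀ x : ℝ, HasDerivAt (fun x => q x + x * deriv q x) (r x) x := by
    intro x
    have := ((hq1 x).hasDerivAt).fun_add ((hasDerivAt_id' x).fun_mul ((hqd1 x).hasDerivAt))
    simpa [hr] using this
  have hderiv2 : deriv (deriv (fun x => x * q x)) = r := by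
    rw [hderiv1]; exact funext fun x => (hD2 x).deriv
  have hr_cont : Continuous r := by
    exact (hqd.continuous.add (hqd.continuous.add (continuous_id.mul hqd2c)))
  have hr0 : ∀ x : ℝ, M < x → r x = 0 := by
    intro x hx; simp [hr, hq0 x hx, hq00 x hx]
  -- bounds on [0, M+1]
  obtain ⟨C₁, hC₁⟩ := (isCompact_Icc (a := (0:ℝ)) (b := M + 1)).exists_bound_of_continuousOn
    hr_cont.continuousOn
  obtain ⟨C₂, hC₂⟩ := (isCompact_Icc (a := (0:ℝ)) (b := M + 1)).exists_bound_of_continuousOn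
    hqd2c.continuousOn
  set C := max C₁ C₂ with hC
  have hC₁0 : (0:ℝ) ≤ C₁ := le_trans (norm_nonneg _) (hC₁ 0 ⟨le_refl 0, by linarith⟩)
  have hC0 : (0:ℝ) ≤ C := le_trans hC₁0 (le_max_left _ _)
  set lam := (C + 1) * (M + 1) with hlam
  have hlam_pos : 0 < lam := by positivity
  have hM1 : (0:ℝ) < M + 1 := by linarith
  -- the key inequality machinery
  have key : ∀ g : ℝ → ℝ, (∀ x ∈ Icc (0:ℝ) (M+1), ‖g x‖ ≤ C) → (∀ x, M + 1 < x → g x = 0) →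
      ∀ x : ℝ, 0 < x → 0 ≤ lam * x⁻¹ + g x := by
    intro g hgb hg0 x hx
    rcases le_or_gt x (M + 1) with h | h
    · have hxinv : (M + 1)⁻¹ ≤ x⁻¹ := by
        apply inv_anti₀ hx h
      have h1 : C + 1 ≤ lam * x⁻¹ := by
        have : lam * (M+1)⁻¹ ≤ lam * x⁻¹ := by
          exact mul_le_mul_of_nonneg_left hxinv (le_of_lt hlam_pos)
        calc C + 1 = lam * (M+1)⁻¹ := by rw [hlam]; field_simp
          _ ≤ lam * x⁻¹ := this
      have h2 : -C ≤ g x := by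
        have := hgb x ⟨le_of_lt hx, h⟩
        have := abs_le.mp (by simpa [Real.norm_eq_abs] using this)
        linarith [this.1]
      linarith
    · rw [hg0 x h]
      have : 0 ≤ lam * x⁻¹ := by positivity
      linarith
  refine ⟨lam, hlam_pos, ?_, ?_, ?_⟩
  · -- lam x log x + x q x
    refine aux_convex lam (fun x => x * q x) (contDiff_id.mul hq) ?_
    intro x hx
    rw [hderiv2]
    refine key r (fun y hy => hC₁ y hy |>.trans (le_max_left _ _)) (fun y hy => hr0 y (by linarith)) x hx
  · -- lam x log x - x q x
    have : ConvexOn ℝ (Set.Ioi 0) (fun x => lam * (x * Real.log x) + -(x * q x)) := by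
      refine aux_convex lam (fun x => -(x * q x)) ((contDiff_id.mul hq).neg) ?_
      intro x hx
      have e1 : deriv (fun x => -(x * q x)) = fun x => -(q x + x * deriv q x) :=
        funext fun y => ((hD1 y).neg).deriv
      have e2 : deriv (deriv (fun x => -(x * q x))) x = -(r x) := by
        rw [e1]; exact ((hD2 x).neg).deriv
      rw [e2]
      refine key (fun y => -(r y)) (fun y hy => ?_) (fun y hy => by simp [hr0 y (by linarith)]) x hx
      rw [norm_neg]; exact (hC₁ y hy).trans (le_max_left _ _)
    simpa [sub_eq_add_neg] using this
  · -- lam x log x + q x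
    refine aux_convex lam q hq ?_
    intro x hx
    refine key (deriv (deriv q)) (fun y hy => hC₂ y hy |>.trans (le_max_right _ _))
      (fun y hy => hq00 y (by linarith)) x hx
end

section
/- Let π : ℝ → ℝ be twice continuously differentiable, and let ρ : ℝ × ℝ³ → ℝ and u : ℝ × ℝ³ → ℝ³ be smooth functions satisfying pointwise the continuity equation ∂ₜρ + div(ρu) = 0 and the velocity equation ∂ₜu + ∇(π∘ρ) = Δu, where div, ∇ and Δ act in the spatial variables (Δ acting componentwise on u). Then at every point of ℝ × ℝ³: (i) ∂ₜ(div u) + Δ(π(ρ) − div u) = 0, and (ii) ∂ₜ(div u − π(ρ)) − Δ(div u − π(ρ)) = div(π(ρ)·u) + (ρ·π'(ρ) − π(ρ))·div u. -/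
open scoped ContDiff



/-- Time derivative `∂ₜ F (t,x)` of a function `F : ℝ × ℝ³ → ℝ`. -/
noncomputable def timeDeriv (F : ℝ × (Fin 3 → ℝ) → ℝ) (t : ℝ) (x : Fin 3 → ℝ) : ℝ :=
  deriv (fun s => F (s, x)) t

/-- Spatial partial derivative `∂ᵢ f (x)` of a function `f : ℝ³ → ℝ`. -/
noncomputable def spDeriv (i : Fin 3) (f : (Fin 3 → ℝ) → ℝ) (x : Fin 3 → ℝ) : ℝ :=
  fderiv ℝ f x (Pi.single i 1)

/-- Spatial divergence `div v (x) = Σᵢ ∂ᵢ vᵢ (x)` of a vector field `v : ℝ³ → ℝ³`. -/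
noncomputable def spDiv (v : (Fin 3 → ℝ) → Fin 3 → ℝ) (x : Fin 3 → ℝ) : ℝ :=
  ∑ i, spDeriv i (fun y => v y i) x

/-- Spatial Laplacian `Δ f (x) = Σᵢ ∂ᵢ² f (x)` of a function `f : ℝ³ → ℝ`. -/
noncomputable def spLap (f : (Fin 3 → ℝ) → ℝ) (x : Fin 3 → ℝ) : ℝ :=
  ∑ i, spDeriv i (spDeriv i f) x

/-- Directional derivative on the full space `ℝ × ℝ³`. -/
noncomputable def pd (v : ℝ × (Fin 3 → ℝ)) (F : ℝ × (Fin 3 → ℝ) → ℝ)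
    (p : ℝ × (Fin 3 → ℝ)) : ℝ :=
  fderiv ℝ F p v

noncomputable def e0 : ℝ × (Fin 3 → ℝ) := (1, 0)
noncomputable def es (i : Fin 3) : ℝ × (Fin 3 → ℝ) := (0, Pi.single i 1)

lemma pd_smooth {F : ℝ × (Fin 3 → ℝ) → ℝ} (hF : ContDiff ℝ ∞ F) (v : ℝ × (Fin 3 → ℝ)) :
    ContDiff ℝ ∞ (pd v F) :=
  (hF.fderiv_right (by simp)).clm_apply contDiff_const

lemma pd_c1 {F : ℝ × (Fin 3 → ℝ) → ℝ} (hF : ContDiff ℝ 2 F) (v : ℝ × (Fin 3 → ℝ)) :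
    ContDiff ℝ 1 (pd v F) :=
  (hF.fderiv_right (by norm_num)).clm_apply contDiff_const

lemma pd_comm {F : ℝ × (Fin 3 → ℝ) → ℝ} (hF : ContDiff ℝ ∞ F) (v w p) :
    pd v (pd w F) p = pd w (pd v F) p := by
  have hd : Differentiable ℝ (fderiv ℝ F) :=
    (hF.fderiv_right (m := 1) (by decide)).differentiable one_ne_zero
  have h1 : ∀ v w : ℝ × (Fin 3 → ℝ), pd v (pd w F) p = fderiv ℝ (fderiv ℝ F) p v w := by
    intro v w
    unfold pd
    rw [fderiv_clm_apply (hd p) (differentiableAt_const w)]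
    simp
  rw [h1, h1]
  exact (hF.contDiffAt.isSymmSndFDerivAt (by rw [minSmoothness_of_isRCLikeNormedField]; exact WithTop.coe_le_coe.mpr le_top)).eq v w

lemma timeDeriv_eq {F : ℝ × (Fin 3 → ℝ) → ℝ} {t : ℝ} {x : Fin 3 → ℝ}
    (hF : DifferentiableAt ℝ F (t, x)) : timeDeriv F t x = pd e0 F (t, x) := by
  have h : HasDerivAt (fun s : ℝ => (s, x)) ((1:ℝ), (0 : Fin 3 → ℝ)) t :=
    HasDerivAt.prodMk (hasDerivAt_id t) (hasDerivAt_const t x)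
  exact (hF.hasFDerivAt.comp_hasDerivAt t h).deriv

lemma spDeriv_slice {F : ℝ × (Fin 3 → ℝ) → ℝ} {t : ℝ} {x : Fin 3 → ℝ}
    (hF : DifferentiableAt ℝ F (t, x)) (i : Fin 3) :
    spDeriv i (fun y => F (t, y)) x = pd (es i) F (t, x) := by
  have h : HasFDerivAt (fun y : Fin 3 → ℝ => (t, y))
      ((0 : (Fin 3 → ℝ) →L[ℝ] ℝ).prod (ContinuousLinearMap.id ℝ (Fin 3 → ℝ))) x :=
    HasFDerivAt.prodMk (hasFDerivAt_const t x) (hasFDerivAt_id x)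
  have := (hF.hasFDerivAt.comp x h).fderiv
  simp only [spDeriv, Function.comp_def] at this ⊢
  rw [this]
  simp [pd, es]

lemma spLap_slice {H : ℝ × (Fin 3 → ℝ) → ℝ} (hd : Differentiable ℝ H)
    (hd2 : ∀ v, Differentiable ℝ (pd v H)) (t : ℝ) (x : Fin 3 → ℝ) :
    spLap (fun y => H (t, y)) x = ∑ i, pd (es i) (pd (es i) H) (t, x) := by
  unfold spLap
  refine Finset.sum_congr rfl fun i _ => ?_
  have h1 : spDeriv i (fun y => H (t, y)) = fun y => pd (es i) H (t, y) :=
    funext fun y => spDeriv_slice (hd _) i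
  rw [h1]
  exact spDeriv_slice (hd2 (es i) _) i

lemma pd_sub {F G : ℝ × (Fin 3 → ℝ) → ℝ} {p} (hF : DifferentiableAt ℝ F p)
    (hG : DifferentiableAt ℝ G p) (v) :
    pd v (fun q => F q - G q) p = pd v F p - pd v G p := by
  simp [pd, fderiv_fun_sub hF hG]

lemma pd_add {F G : ℝ × (Fin 3 → ℝ) → ℝ} {p} (hF : DifferentiableAt ℝ F p)
    (hG : DifferentiableAt ℝ G p) (v) :
    pd v (fun q => F q + G q) p = pd v F p + pd v G p := by
  simp [pd, fderiv_fun_add hF hG]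

lemma pd_sum {F : Fin 3 → (ℝ × (Fin 3 → ℝ) → ℝ)} {p}
    (hF : ∀ i, DifferentiableAt ℝ (F i) p) (v) :
    pd v (fun q => ∑ i, F i q) p = ∑ i, pd v (F i) p := by
  simp [pd, fderiv_fun_sum (fun i _ => hF i)]

lemma pd_mul {F G : ℝ × (Fin 3 → ℝ) → ℝ} {p} (hF : DifferentiableAt ℝ F p)
    (hG : DifferentiableAt ℝ G p) (v) :
    pd v (fun q => F q * G q) p = F p * pd v G p + pd v F p * G p := by
  simp [pd, fderiv_fun_mul hF hG, mul_comm]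

lemma pd_chain {π : ℝ → ℝ} {ρ : ℝ × (Fin 3 → ℝ) → ℝ} {p}
    (hπ : DifferentiableAt ℝ π (ρ p)) (hρ : DifferentiableAt ℝ ρ p) (v) :
    pd v (fun q => π (ρ q)) p = deriv π (ρ p) * pd v ρ p := by
  have h := fderiv_comp p hπ hρ
  simp only [pd, Function.comp_def] at h ⊢
  rw [h]
  simp only [ContinuousLinearMap.coe_comp', Function.comp_apply]
  rw [show fderiv ℝ ρ p v = fderiv ℝ ρ p v • (1:ℝ) by simp, map_smul, fderiv_apply_one_eq_deriv]
  simp [mul_comm]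

/-- For smooth solutions of `∂ₜρ + div(ρu) = 0`,
`∂ₜu + ∇π(ρ) = Δu`, the effective viscous flux `G = div u − π(ρ)` satisfies
(i) `∂ₜ(div u) + Δ(π(ρ) − div u) = 0` and
(ii) `∂ₜG − ΔG = div(π(ρ)·u) + (ρ·π'(ρ) − π(ρ))·div u` pointwise. -/
theorem effective_viscous_flux_equations
    (π : ℝ → ℝ) (hπ : ContDiff ℝ 2 π)
    (ρ : ℝ × (Fin 3 → ℝ) → ℝ) (u : ℝ × (Fin 3 → ℝ) → Fin 3 → ℝ)
    (hρ : ContDiff ℝ (⊤ : ℕ∞) ρ) (hu : ContDiff ℝ (⊤ : ℕ∞) u)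
    (hcont : ∀ t x, timeDeriv ρ t x +
      spDiv (fun y j => ρ (t, y) * u (t, y) j) x = 0)
    (hvel : ∀ t x (i : Fin 3),
      timeDeriv (fun p => u p i) t x + spDeriv i (fun y => π (ρ (t, y))) x =
        spLap (fun y => u (t, y) i) x) :
    ∀ t x,
      (deriv (fun s => spDiv (fun y => u (s, y)) x) t +
        spLap (fun y => π (ρ (t, y)) - spDiv (fun y' => u (t, y')) y) x = 0) ∧
      (deriv (fun s => spDiv (fun y => u (s, y)) x - π (ρ (s, x))) t -
        spLap (fun y => spDiv (fun y' => u (t, y')) y - π (ρ (t, y))) x =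
        spDiv (fun y j => π (ρ (t, y)) * u (t, y) j) x +
          (ρ (t, x) * deriv π (ρ (t, x)) - π (ρ (t, x))) *
            spDiv (fun y => u (t, y)) x) := by
  -- basic smoothness
  have hρ' : ContDiff ℝ ∞ ρ := hρ.of_le (by simp)
  have hU : ∀ i, ContDiff ℝ ∞ (fun q => u q i) := fun i => (contDiff_pi.mp (hu.of_le (by simp))) i
  have hPi : ContDiff ℝ 2 (fun q => π (ρ q)) := hπ.comp (hρ.of_le (by exact WithTop.coe_le_coe.mpr (le_top : (2 : ℕ∞) ≤ ⊤)))
  have hdρ : Differentiable ℝ ρ := hρ'.differentiable (by decide)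
  have hdU : ∀ i, Differentiable ℝ (fun q => u q i) := fun i => (hU i).differentiable (by decide)
  have hdPi : Differentiable ℝ (fun q => π (ρ q)) := hPi.differentiable two_ne_zero
  have hdPiv : ∀ v, Differentiable ℝ (pd v (fun q => π (ρ q))) :=
    fun v => (pd_c1 hPi v).differentiable one_ne_zero
  have hdπ : Differentiable ℝ π := hπ.differentiable two_ne_zero
  -- S = div u as a function on spacetime
  have hS : ContDiff ℝ ∞ (fun q => ∑ j, pd (es j) (fun r => u r j) q) :=
    ContDiff.sum fun j _ => pd_smooth (hU j) (es j)
  have hdS : Differentiable ℝ (fun q => ∑ j, pd (es j) (fun r => u r j) q) :=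
    hS.differentiable (by decide)
  -- slicing the divergence
  have h_slice_div : ∀ s y, spDiv (fun y' => u (s, y')) y =
      ∑ j, pd (es j) (fun r => u r j) (s, y) := by
    intro s y
    exact Finset.sum_congr rfl fun i _ => spDeriv_slice (hdU i (s, y)) i
  have h_div_ρu : ∀ s y, spDiv (fun y' j => ρ (s, y') * u (s, y') j) y =
      ∑ i, pd (es i) (fun q => ρ q * u q i) (s, y) := by
    intro s y
    exact Finset.sum_congr rfl fun i _ =>
      spDeriv_slice ((hdρ (s, y)).mul (hdU i (s, y))) i
  have h_div_Piu : ∀ s y, spDiv (fun y' j => π (ρ (s, y')) * u (s, y') j) y =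
      ∑ i, pd (es i) (fun q => π (ρ q) * u q i) (s, y) := by
    intro s y
    exact Finset.sum_congr rfl fun i _ =>
      spDeriv_slice ((hdPi (s, y)).mul (hdU i (s, y))) i
  -- the PDEs in directional-derivative form
  have hcont' : ∀ q : ℝ × (Fin 3 → ℝ),
      pd e0 ρ q + ∑ i, pd (es i) (fun r => ρ r * u r i) q = 0 := by
    rintro ⟨s, y⟩
    have h := hcont s y
    rwa [timeDeriv_eq (hdρ (s, y)), h_div_ρu s y] at h
  have hvel' : ∀ (i : Fin 3) (q : ℝ × (Fin 3 → ℝ)),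
      pd e0 (fun r => u r i) q + pd (es i) (fun r => π (ρ r)) q =
        ∑ j, pd (es j) (pd (es j) (fun r => u r i)) q := by
    rintro i ⟨s, y⟩
    have h := hvel s y i
    have e1 : timeDeriv (fun p => u p i) s y = pd e0 (fun r => u r i) (s, y) :=
      timeDeriv_eq (hdU i (s, y))
    have e2 : spDeriv i (fun y' => π (ρ (s, y'))) y = pd (es i) (fun r => π (ρ r)) (s, y) :=
      spDeriv_slice (hdPi (s, y)) i
    have e3 : spLap (fun y' => u (s, y') i) y =
        ∑ j, pd (es j) (pd (es j) (fun r => u r i)) (s, y) :=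
      spLap_slice (hdU i) (fun v => (pd_smooth (hU i) v).differentiable (by decide)) s y
    rw [e1, e2, e3] at h
    exact h
  -- differentiated velocity equation
  have hstar : ∀ (i : Fin 3) (q : ℝ × (Fin 3 → ℝ)),
      pd (es i) (pd e0 (fun r => u r i)) q + pd (es i) (pd (es i) (fun r => π (ρ r))) q =
        ∑ j, pd (es i) (pd (es j) (pd (es j) (fun r => u r i))) q := by
    intro i q
    have hfun : (fun r => pd e0 (fun r' => u r' i) r + pd (es i) (fun r' => π (ρ r')) r) =
        (fun r => ∑ j, pd (es j) (pd (es j) (fun r' => u r' i)) r) :=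
      funext fun r => hvel' i r
    have h1 : pd (es i) (fun r => pd e0 (fun r' => u r' i) r +
        pd (es i) (fun r' => π (ρ r')) r) q =
        pd (es i) (pd e0 (fun r => u r i)) q + pd (es i) (pd (es i) (fun r => π (ρ r))) q :=
      pd_add ((pd_smooth (hU i) e0).differentiable (by decide) q) (hdPiv (es i) q) (es i)
    have h2 : pd (es i) (fun r => ∑ j, pd (es j) (pd (es j) (fun r' => u r' i)) r) q =
        ∑ j, pd (es i) (pd (es j) (pd (es j) (fun r => u r i))) q :=
      pd_sum (fun j => (pd_smooth (pd_smooth (hU i) (es j)) (es j)).differentiable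
        (by decide) q) (es i)
    rw [← h1, hfun, h2]
  -- the key identity
  have hkey : ∀ q : ℝ × (Fin 3 → ℝ),
      (∑ i, pd e0 (pd (es i) (fun r => u r i)) q) +
        (∑ i, pd (es i) (pd (es i) (fun r => π (ρ r))) q) =
        ∑ i, ∑ j, pd (es i) (pd (es i) (pd (es j) (fun r => u r j))) q := by
    intro q
    have hsum := Finset.sum_congr rfl (fun i (_ : i ∈ Finset.univ) => hstar i q)
    rw [Finset.sum_add_distrib] at hsum
    have hc : ∀ i, pd e0 (pd (es i) (fun r => u r i)) q =
        pd (es i) (pd e0 (fun r => u r i)) q := fun i => pd_comm (hU i) e0 (es i) q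
    have hswap : ∑ i, ∑ j, pd (es i) (pd (es j) (pd (es j) (fun r => u r i))) q =
        ∑ i, ∑ j, pd (es i) (pd (es i) (pd (es j) (fun r => u r j))) q := by
      rw [Finset.sum_comm]
      refine Finset.sum_congr rfl fun j _ => Finset.sum_congr rfl fun i _ => ?_
      -- goal: pd (es i) (pd (es j) (pd (es j) (u i))) = pd (es j) (pd (es j) (pd (es i) (u i)))
      have hinner : pd (es j) (pd (es i) (fun r => u r i)) =
          pd (es i) (pd (es j) (fun r => u r i)) :=
        funext fun r => pd_comm (hU i) (es j) (es i) r
      calc pd (es i) (pd (es j) (pd (es j) (fun r => u r i))) q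
          = pd (es j) (pd (es i) (pd (es j) (fun r => u r i))) q :=
            pd_comm (pd_smooth (hU i) (es j)) (es i) (es j) q
        _ = pd (es j) (pd (es j) (pd (es i) (fun r => u r i))) q := by rw [← hinner]
    calc (∑ i, pd e0 (pd (es i) (fun r => u r i)) q) +
          (∑ i, pd (es i) (pd (es i) (fun r => π (ρ r))) q)
        = (∑ i, pd (es i) (pd e0 (fun r => u r i)) q) +
          (∑ i, pd (es i) (pd (es i) (fun r => π (ρ r))) q) := by
          rw [Finset.sum_congr rfl fun i _ => hc i]
      _ = ∑ i, ∑ j, pd (es i) (pd (es j) (pd (es j) (fun r => u r i))) q := hsum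
      _ = ∑ i, ∑ j, pd (es i) (pd (es i) (pd (es j) (fun r => u r j))) q := hswap
  intro t x
  have hdiffS : ∀ j, Differentiable ℝ (pd (es j) (fun r => u r j)) :=
    fun j => (pd_smooth (hU j) (es j)).differentiable (by decide)
  have hdiffSS : ∀ i j, Differentiable ℝ (pd (es i) (pd (es j) (fun r => u r j))) :=
    fun i j => (pd_smooth (pd_smooth (hU j) (es j)) (es i)).differentiable (by decide)
  -- expansion of pd v S
  have hpdS : ∀ v, pd v (fun q => ∑ j, pd (es j) (fun r => u r j) q) =
      fun q => ∑ j, pd v (pd (es j) (fun r => u r j)) q :=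
    fun v => funext fun q => pd_sum (fun j => hdiffS j q) v
  have hdSv : ∀ v, Differentiable ℝ (pd v (fun q => ∑ j, pd (es j) (fun r => u r j) q)) := by
    intro v
    rw [hpdS v]
    exact Differentiable.fun_sum fun j _ =>
      (pd_smooth (pd_smooth (hU j) (es j)) v).differentiable (by decide)
  have hpdSS : ∀ i, pd (es i) (pd (es i) (fun q => ∑ j, pd (es j) (fun r => u r j) q)) (t, x) =
      ∑ j, pd (es i) (pd (es i) (pd (es j) (fun r => u r j))) (t, x) := by
    intro i
    rw [hpdS (es i)]
    exact pd_sum (fun j => (pd_smooth (pd_smooth (hU j) (es j)) (es i)).differentiable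
      (by decide) (t, x)) (es i)
  -- time derivative of div u
  have g1 : deriv (fun s => spDiv (fun y => u (s, y)) x) t =
      ∑ i, pd e0 (pd (es i) (fun r => u r i)) (t, x) := by
    have hfe : (fun s => spDiv (fun y => u (s, y)) x) =
        fun s => (fun q => ∑ j, pd (es j) (fun r => u r j) q) (s, x) :=
      funext fun s => h_slice_div s x
    rw [hfe]
    exact (timeDeriv_eq (hdS (t, x))).trans (pd_sum (fun j => hdiffS j (t, x)) e0)
  constructor
  · -- part (i)
    have hdH : Differentiable ℝ
        (fun q => π (ρ q) - ∑ j, pd (es j) (fun r => u r j) q) := hdPi.sub hdS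
    have hdHv : ∀ v, Differentiable ℝ
        (pd v (fun q => π (ρ q) - ∑ j, pd (es j) (fun r => u r j) q)) := by
      intro v
      have h1 : pd v (fun q => π (ρ q) - ∑ j, pd (es j) (fun r => u r j) q) =
          fun q => pd v (fun r => π (ρ r)) q -
            pd v (fun q' => ∑ j, pd (es j) (fun r => u r j) q') q :=
        funext fun q => pd_sub (hdPi q) (hdS q) v
      rw [h1]
      exact (hdPiv v).sub (hdSv v)
    have g2 : spLap (fun y => π (ρ (t, y)) - spDiv (fun y' => u (t, y')) y) x =
        ∑ i, pd (es i) (pd (es i)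
          (fun q => π (ρ q) - ∑ j, pd (es j) (fun r => u r j) q)) (t, x) := by
      have hfe : (fun y => π (ρ (t, y)) - spDiv (fun y' => u (t, y')) y) =
          fun y => (fun q => π (ρ q) - ∑ j, pd (es j) (fun r => u r j) q) (t, y) :=
        funext fun y => by rw [h_slice_div t y]
      rw [hfe]
      exact spLap_slice hdH hdHv t x
    have g3 : ∀ i, pd (es i) (pd (es i)
        (fun q => π (ρ q) - ∑ j, pd (es j) (fun r => u r j) q)) (t, x) =
        pd (es i) (pd (es i) (fun r => π (ρ r))) (t, x) -
          ∑ j, pd (es i) (pd (es i) (pd (es j) (fun r => u r j))) (t, x) := by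
      intro i
      have h1 : pd (es i) (fun q => π (ρ q) - ∑ j, pd (es j) (fun r => u r j) q) =
          fun q => pd (es i) (fun r => π (ρ r)) q -
            pd (es i) (fun q' => ∑ j, pd (es j) (fun r => u r j) q') q :=
        funext fun q => pd_sub (hdPi q) (hdS q) (es i)
      rw [h1, pd_sub (hdPiv (es i) (t, x)) (hdSv (es i) (t, x)) (es i), hpdSS i]
    rw [g1, g2, Finset.sum_congr rfl (fun i _ => g3 i), Finset.sum_sub_distrib]
    have hk := hkey (t, x)
    linarith
  · -- part (ii)
    have hdH2 : Differentiable ℝ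
        (fun q => (∑ j, pd (es j) (fun r => u r j) q) - π (ρ q)) := hdS.sub hdPi
    have hdH2v : ∀ v, Differentiable ℝ
        (pd v (fun q => (∑ j, pd (es j) (fun r => u r j) q) - π (ρ q))) := by
      intro v
      have h1 : pd v (fun q => (∑ j, pd (es j) (fun r => u r j) q) - π (ρ q)) =
          fun q => pd v (fun q' => ∑ j, pd (es j) (fun r => u r j) q') q -
            pd v (fun r => π (ρ r)) q :=
        funext fun q => pd_sub (hdS q) (hdPi q) v
      rw [h1]
      exact (hdSv v).sub (hdPiv v)
    have g4 : deriv (fun s => spDiv (fun y => u (s, y)) x - π (ρ (s, x))) t =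
        (∑ i, pd e0 (pd (es i) (fun r => u r i)) (t, x)) -
          pd e0 (fun r => π (ρ r)) (t, x) := by
      have hfe : (fun s => spDiv (fun y => u (s, y)) x - π (ρ (s, x))) =
          fun s => (fun q => (∑ j, pd (es j) (fun r => u r j) q) - π (ρ q)) (s, x) :=
        funext fun s => by rw [h_slice_div s x]
      rw [hfe]
      refine (timeDeriv_eq (hdH2 (t, x))).trans ?_
      rw [pd_sub (hdS (t, x)) (hdPi (t, x)) e0,
        pd_sum (fun j => hdiffS j (t, x)) e0]
    have g5 : spLap (fun y => spDiv (fun y' => u (t, y')) y - π (ρ (t, y))) x =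
        (∑ i, ∑ j, pd (es i) (pd (es i) (pd (es j) (fun r => u r j))) (t, x)) -
          ∑ i, pd (es i) (pd (es i) (fun r => π (ρ r))) (t, x) := by
      have hfe : (fun y => spDiv (fun y' => u (t, y')) y - π (ρ (t, y))) =
          fun y => (fun q => (∑ j, pd (es j) (fun r => u r j) q) - π (ρ q)) (t, y) :=
        funext fun y => by rw [h_slice_div t y]
      rw [hfe, spLap_slice hdH2 hdH2v t x]
      have g6 : ∀ i, pd (es i) (pd (es i)
          (fun q => (∑ j, pd (es j) (fun r => u r j) q) - π (ρ q))) (t, x) =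
          (∑ j, pd (es i) (pd (es i) (pd (es j) (fun r => u r j))) (t, x)) -
            pd (es i) (pd (es i) (fun r => π (ρ r))) (t, x) := by
        intro i
        have h1 : pd (es i) (fun q => (∑ j, pd (es j) (fun r => u r j) q) - π (ρ q)) =
            fun q => pd (es i) (fun q' => ∑ j, pd (es j) (fun r => u r j) q') q -
              pd (es i) (fun r => π (ρ r)) q :=
          funext fun q => pd_sub (hdS q) (hdPi q) (es i)
        rw [h1, pd_sub (hdSv (es i) (t, x)) (hdPiv (es i) (t, x)) (es i), hpdSS i]
      rw [Finset.sum_congr rfl (fun i _ => g6 i), Finset.sum_sub_distrib]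
    have g8 : ∀ i, pd (es i) (fun q => π (ρ q) * u q i) (t, x) =
        π (ρ (t, x)) * pd (es i) (fun r => u r i) (t, x) +
          (deriv π (ρ (t, x)) * pd (es i) ρ (t, x)) * u (t, x) i := by
      intro i
      have h := pd_mul (F := fun q => π (ρ q)) (G := fun q => u q i)
        (hdPi (t, x)) (hdU i (t, x)) (es i)
      rw [pd_chain (hdπ _) (hdρ (t, x)) (es i)] at h
      exact h
    have g10 : pd e0 (fun r => π (ρ r)) (t, x) =
        deriv π (ρ (t, x)) * pd e0 ρ (t, x) := pd_chain (hdπ _) (hdρ _) e0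
    have g12 : ∀ i, pd (es i) (fun r => ρ r * u r i) (t, x) =
        ρ (t, x) * pd (es i) (fun r => u r i) (t, x) +
          pd (es i) ρ (t, x) * u (t, x) i :=
      fun i => pd_mul (hdρ _) (hdU i _) (es i)
    have g11 := hcont' (t, x)
    rw [Finset.sum_congr rfl (fun i _ => g12 i)] at g11
    have hk := hkey (t, x)
    rw [g4, g5, g10, h_div_Piu t x, h_slice_div t x,
      Finset.sum_congr rfl (fun i (_ : i ∈ Finset.univ) => g8 i)]
    simp only [Fin.sum_univ_three] at g11 hk ⊢
    linear_combination hk - deriv π (ρ (t, x)) * g11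
end

section
/- Let γ > 1 and a₁, a₂, C₀ > 0, and let p : [0,∞) → ℝ be continuously differentiable with a₂·x^γ − C₀ ≤ p(x) ≤ C₀ + a₁·x^γ for all x ≥ 0 and |p'(x)| ≤ C₀·x^{γ−1} for all x > 1. Then there exists a constant C' > 0 such that for all t, s ≥ 0, (p(t) − p(s))·sgn(t − s)·t ≥ −C'·(t^γ + 1)·|t − s|, where sgn denotes the sign function. -/
set_option maxHeartbeats 1000000 in
/-- For a possibly non-monotone pressure `p` with `γ`-growth
(`a₂·x^γ − C₀ ≤ p(x) ≤ C₀ + a₁·x^γ` and `|p'(x)| ≤ C₀·x^{γ−1}` for `x > 1`), there is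
`C' > 0` with `(p(t) − p(s))·sgn(t − s)·t ≥ −C'·(t^γ + 1)·|t − s|` for all `t, s ≥ 0`. -/
theorem pressure_monotonicity_defect_lower_bound
    (γ a₁ a₂ C₀ : ℝ) (hγ : 1 < γ) (ha₁ : 0 < a₁) (ha₂ : 0 < a₂) (hC₀ : 0 < C₀)
    (p : ℝ → ℝ) (hp : ContDiffOn ℝ 1 p (Set.Ici 0))
    (hbound : ∀ x ≥ (0:ℝ), a₂ * x ^ γ - C₀ ≤ p x ∧ p x ≤ C₀ + a₁ * x ^ γ)
    (hderiv : ∀ x > (1:ℝ), |deriv p x| ≤ C₀ * x ^ (γ - 1)) :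
    ∃ C' : ℝ, 0 < C' ∧
      ∀ t s : ℝ, 0 ≤ t → 0 ≤ s →
        -C' * (t ^ γ + 1) * |t - s| ≤ (p t - p s) * Real.sign (t - s) * t := by
  have hγ1 : (0:ℝ) ≤ γ - 1 := by linarith
  -- differentiability at positive points
  have hdiffAt : ∀ x : ℝ, 0 < x → DifferentiableAt ℝ p x := fun x hx =>
    (hp.contDiffAt (Ici_mem_nhds hx)).differentiableAt one_ne_zero
  -- MVT bound for 2 ≤ a ≤ b
  have hMVT : ∀ a b : ℝ, 2 ≤ a → a ≤ b → |p b - p a| ≤ C₀ * b ^ (γ - 1) * (b - a) := by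
    intro a b ha hab
    have h := (convex_Icc a b).norm_image_sub_le_of_norm_deriv_le
      (f := p) (C := C₀ * b ^ (γ - 1))
      (fun x hx => hdiffAt x (by linarith [hx.1]))
      (fun x hx => by
        have h1 : (1:ℝ) < x := by linarith [hx.1]
        have h2 := hderiv x h1
        have hm : x ^ (γ - 1) ≤ b ^ (γ - 1) :=
          Real.rpow_le_rpow (by linarith) hx.2 hγ1
        calc ‖deriv p x‖ = |deriv p x| := rfl
          _ ≤ C₀ * x ^ (γ - 1) := h2
          _ ≤ C₀ * b ^ (γ - 1) := mul_le_mul_of_nonneg_left hm hC₀.le)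
      (Set.left_mem_Icc.2 hab) (Set.right_mem_Icc.2 hab)
    rw [Real.norm_eq_abs, Real.norm_eq_abs,
      abs_of_nonneg (by linarith : (0:ℝ) ≤ b - a)] at h
    exact h
  -- Lipschitz bound on [0,4]
  obtain ⟨L, hLbd⟩ := (isCompact_Icc (a := (0:ℝ)) (b := 4)).exists_bound_of_continuousOn
    ((hp.continuousOn_derivWithin (uniqueDiffOn_Ici 0) le_rfl).mono Set.Icc_subset_Ici_self)
  set L' := max L 0 with hL'def
  have hL'0 : 0 ≤ L' := le_max_right _ _
  have hLip : ∀ x y : ℝ, x ∈ Set.Icc (0:ℝ) 4 → y ∈ Set.Icc (0:ℝ) 4 →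
      |p y - p x| ≤ L' * |y - x| := by
    intro x y hx hy
    have h := (convex_Icc (0:ℝ) 4).norm_image_sub_le_of_norm_hasDerivWithin_le
      (f := p) (f' := fun z => derivWithin p (Set.Ici 0) z) (C := L')
      (fun z hz => (((hp.differentiableOn one_ne_zero) z hz.1).hasDerivWithinAt).mono
        Set.Icc_subset_Ici_self)
      (fun z hz => (hLbd z hz).trans (le_max_left _ _)) hx hy
    simpa [Real.norm_eq_abs] using h
  -- constants
  set M : ℝ := 2 * C₀ + a₁ * (2:ℝ) ^ γ with hMdef
  have h2γ : (0:ℝ) < (2:ℝ) ^ γ := Real.rpow_pos_of_pos (by norm_num) _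
  have hM0 : 0 < M := by positivity
  have h2g : (0:ℝ) < (2:ℝ) ^ (γ - 1) := Real.rpow_pos_of_pos (by norm_num) _
  have hx1 : 0 < C₀ * (2:ℝ) ^ (γ - 1) := mul_pos hC₀ h2g
  refine ⟨4 * L' + 2 * M + C₀ * (2:ℝ) ^ (γ - 1) + C₀ + (2 * C₀ + a₁) + 1, by positivity, ?_⟩
  set C' : ℝ := 4 * L' + 2 * M + C₀ * (2:ℝ) ^ (γ - 1) + C₀ + (2 * C₀ + a₁) + 1 with hC'def
  have hc1 : 4 * L' ≤ C' := by rw [hC'def]; linarith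
  have hc2 : 2 * M ≤ C' := by rw [hC'def]; linarith
  have hc3 : C₀ * (2:ℝ) ^ (γ - 1) ≤ C' := by rw [hC'def]; linarith
  have hc4 : C₀ ≤ C' := by rw [hC'def]; linarith
  have hc5 : 2 * C₀ + a₁ ≤ C' := by rw [hC'def]; linarith
  have hC'0 : 0 ≤ C' := le_trans hC₀.le hc4
  intro t s ht hs
  have htγ : 0 ≤ t ^ γ := Real.rpow_nonneg ht _
  have hsγ : 0 ≤ s ^ γ := Real.rpow_nonneg hs _
  rcases lt_trichotomy t s with hts | hts | hts
  · -- t < s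
    have hst0 : (0:ℝ) ≤ s - t := by linarith
    have hsign : Real.sign (t - s) = -1 := Real.sign_of_neg (by linarith)
    have habs : |t - s| = s - t := by rw [abs_of_neg (by linarith)]; ring
    have hrw : (p t - p s) * Real.sign (t - s) * t = (p s - p t) * t := by
      rw [hsign]; ring
    rw [habs, hrw]
    have hCst : 0 ≤ C' * (s - t) := mul_nonneg hC'0 hst0
    have hCtγ : 0 ≤ C' * t ^ γ * (s - t) := mul_nonneg (mul_nonneg hC'0 htγ) hst0
    by_cases hs4 : s ≤ 4
    · -- Lipschitz case
      have hl := hLip t s ⟨ht, by linarith⟩ ⟨hs, by linarith⟩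
      rw [abs_of_nonneg hst0] at hl
      have h1 : -(L' * (s - t)) ≤ p s - p t := neg_le_of_abs_le hl
      have hA := mul_le_mul_of_nonneg_right h1 ht
      have hB : L' * (s - t) * t ≤ 4 * L' * (s - t) := by
        have := mul_nonneg (mul_nonneg hL'0 hst0) (by linarith : (0:ℝ) ≤ 4 - t)
        nlinarith
      have hC : 4 * L' * (s - t) ≤ C' * (s - t) := mul_le_mul_of_nonneg_right hc1 hst0
      nlinarith
    · push_neg at hs4
      by_cases h2t : s ≤ 2 * t
      · -- MVT case, t ≥ 2
        have ht2 : (2:ℝ) ≤ t := by linarith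
        have ht0 : (0:ℝ) < t := by linarith
        have hl := hMVT t s ht2 hts.le
        have h1 : -(C₀ * s ^ (γ - 1) * (s - t)) ≤ p s - p t := neg_le_of_abs_le hl
        have hsle : s ^ (γ - 1) ≤ (2:ℝ) ^ (γ - 1) * t ^ (γ - 1) := by
          have h := Real.rpow_le_rpow hs h2t hγ1
          rwa [Real.mul_rpow (by norm_num) ht] at h
        have htg : t ^ (γ - 1) * t = t ^ γ := by
          calc t ^ (γ - 1) * t = t ^ (γ - 1) * t ^ (1:ℝ) := by rw [Real.rpow_one]
            _ = t ^ (γ - 1 + 1) := (Real.rpow_add ht0 _ _).symm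
            _ = t ^ γ := by norm_num
        have hA := mul_le_mul_of_nonneg_right h1 ht
        have hB1 : C₀ * s ^ (γ - 1) ≤ C₀ * ((2:ℝ) ^ (γ - 1) * t ^ (γ - 1)) :=
          mul_le_mul_of_nonneg_left hsle hC₀.le
        have hB2 : C₀ * s ^ (γ - 1) * (s - t) * t
            ≤ C₀ * ((2:ℝ) ^ (γ - 1) * t ^ (γ - 1)) * (s - t) * t :=
          mul_le_mul_of_nonneg_right (mul_le_mul_of_nonneg_right hB1 hst0) ht
        have hB3 : C₀ * ((2:ℝ) ^ (γ - 1) * t ^ (γ - 1)) * (s - t) * t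
            = C₀ * (2:ℝ) ^ (γ - 1) * t ^ γ * (s - t) := by rw [← htg]; ring
        have hB4 : C₀ * (2:ℝ) ^ (γ - 1) * t ^ γ * (s - t) ≤ C' * t ^ γ * (s - t) :=
          mul_le_mul_of_nonneg_right (mul_le_mul_of_nonneg_right hc3 htγ) hst0
        nlinarith
      · -- far case s > 2t
        push_neg at h2t
        have hps := (hbound s hs).1
        have hpt := (hbound t ht).2
        have ha2s : 0 ≤ a₂ * s ^ γ := mul_nonneg ha₂.le hsγ
        have h1 : -(2 * C₀ + a₁ * t ^ γ) ≤ p s - p t := by linarith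
        have h2 : t ≤ s - t := by linarith
        have hA := mul_le_mul_of_nonneg_right h1 ht
        have hpos : (0:ℝ) ≤ 2 * C₀ + a₁ * t ^ γ := by positivity
        have hB : (2 * C₀ + a₁ * t ^ γ) * t ≤ (2 * C₀ + a₁ * t ^ γ) * (s - t) :=
          mul_le_mul_of_nonneg_left h2 hpos
        have hD : 2 * C₀ + a₁ * t ^ γ ≤ C' * (t ^ γ + 1) := by
          have h01 := mul_nonneg (sub_nonneg.2 hc5) htγ
          have h02 := mul_nonneg hC₀.le htγ
          nlinarith
        have hE := mul_le_mul_of_nonneg_right hD hst0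
        nlinarith
  · simp [hts]
  · -- t > s
    have hst0 : (0:ℝ) ≤ t - s := by linarith
    have hsign : Real.sign (t - s) = 1 := Real.sign_of_pos (by linarith)
    have habs : |t - s| = t - s := abs_of_pos (by linarith)
    have hrw : (p t - p s) * Real.sign (t - s) * t = (p t - p s) * t := by
      rw [hsign]; ring
    rw [habs, hrw]
    have hCst : 0 ≤ C' * (t - s) := mul_nonneg hC'0 hst0
    have hCtγ : 0 ≤ C' * t ^ γ * (t - s) := mul_nonneg (mul_nonneg hC'0 htγ) hst0
    by_cases ht4 : t ≤ 4
    · have hl := hLip s t ⟨hs, by linarith⟩ ⟨ht, by linarith⟩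
      rw [abs_of_nonneg hst0] at hl
      have h1 : -(L' * (t - s)) ≤ p t - p s := neg_le_of_abs_le hl
      have hA := mul_le_mul_of_nonneg_right h1 ht
      have hB : L' * (t - s) * t ≤ 4 * L' * (t - s) := by
        have := mul_nonneg (mul_nonneg hL'0 hst0) (by linarith : (0:ℝ) ≤ 4 - t)
        nlinarith
      have hC : 4 * L' * (t - s) ≤ C' * (t - s) := mul_le_mul_of_nonneg_right hc1 hst0
      nlinarith
    · push_neg at ht4
      have ht0 : (0:ℝ) < t := by linarith
      by_cases hs2 : 2 ≤ s
      · have hl := hMVT s t hs2 hts.le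
        have h1 : -(C₀ * t ^ (γ - 1) * (t - s)) ≤ p t - p s := neg_le_of_abs_le hl
        have htg : t ^ (γ - 1) * t = t ^ γ := by
          calc t ^ (γ - 1) * t = t ^ (γ - 1) * t ^ (1:ℝ) := by rw [Real.rpow_one]
            _ = t ^ (γ - 1 + 1) := (Real.rpow_add ht0 _ _).symm
            _ = t ^ γ := by norm_num
        have hA := mul_le_mul_of_nonneg_right h1 ht
        have hB : C₀ * t ^ (γ - 1) * (t - s) * t = C₀ * t ^ γ * (t - s) := by
          rw [← htg]; ring
        have hC : C₀ * t ^ γ * (t - s) ≤ C' * t ^ γ * (t - s) :=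
          mul_le_mul_of_nonneg_right (mul_le_mul_of_nonneg_right hc4 htγ) hst0
        nlinarith
      · push_neg at hs2
        have hps := (hbound s hs).2
        have hpt := (hbound t ht).1
        have hsle : s ^ γ ≤ (2:ℝ) ^ γ :=
          Real.rpow_le_rpow hs hs2.le (by linarith)
        have ha2t : 0 ≤ a₂ * t ^ γ := mul_nonneg ha₂.le htγ
        have h1 : -M ≤ p t - p s := by
          have h01 := mul_le_mul_of_nonneg_left hsle ha₁.le
          rw [hMdef]; nlinarith
        have h2 : t ≤ 2 * (t - s) := by linarith
        have hA := mul_le_mul_of_nonneg_right h1 ht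
        have hB : M * t ≤ M * (2 * (t - s)) := mul_le_mul_of_nonneg_left h2 hM0.le
        have hC : 2 * M * (t - s) ≤ C' * (t - s) := mul_le_mul_of_nonneg_right hc2 hst0
        nlinarith
end
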